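/- arXiv:1307.7577 — 10 statements merged into one kernel-verified Lean document; each statement's English description precedes it below -/
import Mathlib

section
/- If |⟨x_j, θ*⟩| < 1, where θ* is the optimal dual variable of the Lasso problem, then the j-th component β*_j of any Lasso optimal solution β* is zero. -/
/-!
Perturbing a single coordinate of a Lasso minimizer `β` shows that the correlation
`⟪x_i, r⟫` of each column with the residual `r = y - X β` lies in `[-lam, lam]` and equals
`lam * sign (β i)` when `β i ≠ 0`. Hence `r / lam` is dual feasible, and for every dual feasible `θ`
the inner product `⟪θ - r / lam, r / lam - y / lam⟫` is nonnegative, which makes `r / lam`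
the unique feasible point nearest to `y / lam`: `θ* = r / lam`. A strict inequality
`|⟪x_j, r⟫| < lam` is then incompatible with `β j ≠ 0`.
-/

open RealInnerProductSpace

lemma nonpos_of_forall_mul_le_mul_sq {a K δ : ℝ} (hδ : 0 < δ)
    (h : ∀ t, 0 < t → t < δ → a * t ≤ K * t ^ 2) : a ≤ 0 := by
  by_contra! ha
  set t := min (δ / 2) (a / (|K| + 1))
  have ht : 0 < t := lt_min (by positivity) (by positivity)
  have htδ : t < δ := (min_le_left _ _).trans_lt (by linarith)
  have hta : t * (|K| + 1) ≤ a := (le_div_iff₀ (by positivity)).1 (min_le_right _ _)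
  have := h t ht htδ
  nlinarith [le_abs_self K, mul_pos ht ht]

/-- `c` is a subgradient of `lam * |·|` at `b`. -/
lemma abs_le_and_mul_eq_abs_of_forall {b c lam M : ℝ} (hlam : 0 ≤ lam)
    (h : ∀ t, t * c ≤ M * t ^ 2 + lam * (|b + t| - |b|)) :
    |c| ≤ lam ∧ b * c = lam * |b| := by
  have hup : c ≤ lam := by
    refine sub_nonpos.1 (nonpos_of_forall_mul_le_mul_sq (K := M) one_pos fun t ht _ => ?_)
    have := h t
    have : |b + t| - |b| ≤ t := by linarith [abs_add_le b t, abs_of_pos ht]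
    nlinarith
  have hlow : -lam ≤ c := by
    refine neg_le.1 (sub_nonpos.1
      (nonpos_of_forall_mul_le_mul_sq (K := M) one_pos fun t ht _ => ?_))
    have := h (-t)
    have : |b + -t| - |b| ≤ t := by linarith [abs_add_le b (-t), abs_neg t, abs_of_pos ht]
    nlinarith
  refine ⟨abs_le.2 ⟨hlow, hup⟩, ?_⟩
  rcases lt_trichotomy b 0 with hb | rfl | hb
  · have : c ≤ -lam := by
      refine le_neg_iff_add_nonpos_right.2
        (nonpos_of_forall_mul_le_mul_sq (K := M) (neg_pos.2 hb) fun t ht htb => ?_)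
      have := h t
      rw [abs_of_neg (by linarith : b + t < 0), abs_of_neg hb] at this
      nlinarith
    rw [le_antisymm this hlow, abs_of_neg hb]; ring
  · simp
  · have : lam ≤ c := by
      refine sub_nonpos.1 (nonpos_of_forall_mul_le_mul_sq (K := M) hb fun t ht htb => ?_)
      have := h (-t)
      rw [abs_of_pos (by linarith : 0 < b + -t), abs_of_pos hb] at this
      nlinarith
    rw [le_antisymm hup this, abs_of_pos hb, mul_comm]

lemma eq_zero_of_mul_eq_mul_abs_of_abs_lt {b c lam : ℝ} (h : b * c = lam * |b|)
    (hc : |c| < lam) : b = 0 := by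
  have : |b| * lam ≤ |b| * |c| := by rw [← abs_mul, mul_comm, ← h]; exact le_abs_self _
  by_contra hb
  exact absurd (le_of_mul_le_mul_left this (abs_pos.2 hb)) (not_le.2 hc)

lemma eq_of_inner_sub_nonneg_of_norm_sub_le {E : Type*} [NormedAddCommGroup E]
    [InnerProductSpace ℝ E] {u v w : E} (hinner : 0 ≤ ⟪w - v, v - u⟫)
    (hnorm : ‖w - u‖ ≤ ‖v - u‖) : w = v := by
  have hsplit : ‖w - u‖ ^ 2 = ‖w - v‖ ^ 2 + 2 * ⟪w - v, v - u⟫ + ‖v - u‖ ^ 2 := by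
    rw [← norm_add_sq_real, sub_add_sub_cancel]
  have : ‖w - v‖ ^ 2 ≤ 0 := by nlinarith [norm_nonneg (w - u)]
  exact sub_eq_zero.1 <| norm_eq_zero.1 <|
    (pow_eq_zero_iff two_ne_zero).1 (le_antisymm this (by positivity))

section Lasso

variable {ι E : Type*} [Fintype ι] [NormedAddCommGroup E] [InnerProductSpace ℝ E]

noncomputable def lassoObjective (X : ι → E) (y : E) (lam : ℝ) (β : ι → ℝ) : ℝ :=
  (1 / 2) * ‖(∑ j, β j • X j) - y‖ ^ 2 + lam * ∑ j, |β j|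

lemma lassoObjective_add_single [DecidableEq ι] (X : ι → E) (y : E) (lam : ℝ) (β : ι → ℝ)
    (i : ι) (t : ℝ) :
    lassoObjective X y lam (β + Pi.single i t) = lassoObjective X y lam β +
      (t ^ 2 / 2 * ‖X i‖ ^ 2 - t * ⟪X i, y - ∑ k, β k • X k⟫ + lam * (|β i + t| - |β i|)) := by
  have hsum : ∑ k, (β + Pi.single i t : ι → ℝ) k • X k = (∑ k, β k • X k) + t • X i := by
    simp [add_smul, Finset.sum_add_distrib, Pi.single_apply, ite_smul]
  have habs : ∑ k, |(β + Pi.single i t : ι → ℝ) k| = (∑ k, |β k|) + (|β i + t| - |β i|) := by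
    have hpoint : ∀ k, |(β + Pi.single i t : ι → ℝ) k|
        = |β k| + (Pi.single i (|β i + t| - |β i|) : ι → ℝ) k := by
      intro k; rcases eq_or_ne k i with rfl | hk <;> simp [*]
    rw [Finset.sum_congr rfl fun k _ => hpoint k, Finset.sum_add_distrib, Finset.sum_pi_single']
    simp
  have hnorm : ‖(∑ k, β k • X k) + t • X i - y‖ ^ 2 = ‖(∑ k, β k • X k) - y‖ ^ 2
      - 2 * (t * ⟪X i, y - ∑ k, β k • X k⟫) + t ^ 2 * ‖X i‖ ^ 2 := by
    rw [add_sub_right_comm, norm_add_sq_real, inner_smul_right, norm_smul, mul_pow,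
      Real.norm_eq_abs, sq_abs, real_inner_comm, ← neg_sub, inner_neg_right]
    ring
  simp only [lassoObjective, hsum, habs, hnorm]
  ring

variable (X : ι → E) (y : E) {lam : ℝ} {β : ι → ℝ}

lemma abs_inner_residual_le_and_mul_eq (hlam : 0 ≤ lam)
    (hβ : ∀ β', lassoObjective X y lam β ≤ lassoObjective X y lam β') (i : ι) :
    |⟪X i, y - ∑ k, β k • X k⟫| ≤ lam ∧ β i * ⟪X i, y - ∑ k, β k • X k⟫ = lam * |β i| := by
  classical
  refine abs_le_and_mul_eq_abs_of_forall (M := ‖X i‖ ^ 2 / 2) hlam fun t => ?_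
  have := hβ (β + Pi.single i t)
  rw [lassoObjective_add_single] at this
  linarith

lemma inner_sum_smul_le {θ : E} (hθ : ∀ j, |⟪X j, θ⟫| ≤ 1) (β : ι → ℝ) :
    ⟪∑ k, β k • X k, θ⟫ ≤ ∑ k, |β k| := by
  rw [sum_inner]
  refine Finset.sum_le_sum fun k _ => ?_
  rw [real_inner_smul_left]
  calc β k * ⟪X k, θ⟫ ≤ |β k| * |⟪X k, θ⟫| := by rw [← abs_mul]; exact le_abs_self _
    _ ≤ |β k| := mul_le_of_le_one_right (abs_nonneg _) (hθ k)

lemma inner_sum_smul_residual (hlam : 0 ≤ lam)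
    (hβ : ∀ β', lassoObjective X y lam β ≤ lassoObjective X y lam β') :
    ⟪∑ k, β k • X k, y - ∑ k, β k • X k⟫ = lam * ∑ k, |β k| := by
  rw [sum_inner, Finset.mul_sum]
  refine Finset.sum_congr rfl fun k _ => ?_
  rw [real_inner_smul_left, (abs_inner_residual_le_and_mul_eq X y hlam hβ k).2]

noncomputable def lassoDual (lam : ℝ) (β : ι → ℝ) : E := lam⁻¹ • (y - ∑ k, β k • X k)

lemma abs_inner_lassoDual_le (hlam : 0 < lam)
    (hβ : ∀ β', lassoObjective X y lam β ≤ lassoObjective X y lam β') (j : ι) :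
    |⟪X j, lassoDual X y lam β⟫| ≤ 1 := by
  rw [lassoDual, inner_smul_right, abs_mul, abs_inv, abs_of_pos hlam, inv_mul_le_one₀ hlam]
  exact (abs_inner_residual_le_and_mul_eq X y hlam.le hβ j).1

lemma inner_sub_lassoDual_nonneg (hlam : 0 < lam)
    (hβ : ∀ β', lassoObjective X y lam β ≤ lassoObjective X y lam β') {θ : E}
    (hθ : ∀ j, |⟪X j, θ⟫| ≤ 1) :
    0 ≤ ⟪θ - lassoDual X y lam β, lassoDual X y lam β - lam⁻¹ • y⟫ := by
  have hdiff : lassoDual X y lam β - lam⁻¹ • y = -lam⁻¹ • ∑ k, β k • X k := by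
    rw [lassoDual]; module
  rw [hdiff, inner_smul_right, inner_sub_left, real_inner_comm _ θ, lassoDual,
    real_inner_smul_left, real_inner_comm _ (y - _), inner_sum_smul_residual X y hlam.le hβ,
    inv_mul_cancel_left₀ hlam.ne']
  have := inner_sum_smul_le X hθ β
  have : 0 < lam⁻¹ := inv_pos.2 hlam
  nlinarith

end Lasso

/-- Lasso safe-screening rule: if `|⟪x_j, θ*⟫| < 1` where `θ*` is the optimal dual
variable (the projection of `y/λ` onto `{θ : ‖Xᵀθ‖_∞ ≤ 1}`), then the `j`-th
component of any Lasso optimal solution is zero. -/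
theorem stmt_1 {n p : ℕ} (X : Fin p → EuclideanSpace ℝ (Fin n))
    (y : EuclideanSpace ℝ (Fin n)) (lam : ℝ) (hlam : 0 < lam)
    (θs : EuclideanSpace ℝ (Fin n))
    (hθmem : ∀ j, |(⟪X j, θs⟫)| ≤ 1)
    (hθopt : ∀ θ : EuclideanSpace ℝ (Fin n), (∀ j, |(⟪X j, θ⟫)| ≤ 1) →
      ‖θs - (1 / lam) • y‖ ≤ ‖θ - (1 / lam) • y‖)
    (βs : Fin p → ℝ)
    (hβopt : ∀ β : Fin p → ℝ,
      (1 / 2) * ‖(∑ j, βs j • X j) - y‖ ^ 2 + lam * ∑ j, |βs j| ≤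
      (1 / 2) * ‖(∑ j, β j • X j) - y‖ ^ 2 + lam * ∑ j, |β j|)
    (j : Fin p) (hj : |(⟪X j, θs⟫)| < 1) : βs j = 0 := by
  have hθs : θs = lassoDual X y lam βs := by
    refine eq_of_inner_sub_nonneg_of_norm_sub_le
      (inner_sub_lassoDual_nonneg X y hlam hβopt hθmem) ?_
    simpa only [one_div] using hθopt _ (abs_inner_lassoDual_le X y hlam hβopt)
  refine eq_zero_of_mul_eq_mul_abs_of_abs_lt
    (abs_inner_residual_le_and_mul_eq X y hlam.le hβopt j).2 ?_
  rwa [hθs, lassoDual, inner_smul_right, abs_mul, abs_inv, abs_of_pos hlam,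
    inv_mul_lt_one₀ hlam] at hj
end

section
/- Let y ≠ 0, 0 < λ₁ ≤ ‖Xᵀy‖_∞, and let θ₁* be the projection of y/λ₁ onto C = {θ : ‖Xᵀθ‖_∞ ≤ 1}. If θ₁* = γy for some scalar γ, then γ = 1/‖Xᵀy‖_∞. -/
open RealInnerProductSpace

/-- Let `y ≠ 0`, `0 < λ₁ ≤ ‖Xᵀy‖_∞`, and `θ₁*` the projection of `y/λ₁` onto
`C = {θ : ‖Xᵀθ‖_∞ ≤ 1}`. If `θ₁* = γ y` for some scalar `γ`, then `γ = 1/‖Xᵀy‖_∞`. -/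
theorem stmt_7 {n p : ℕ} (X : Fin p → EuclideanSpace ℝ (Fin n))
    (y : EuclideanSpace ℝ (Fin n)) (hy : y ≠ 0) (lmax : ℝ)
    (hlmax : IsGreatest (Set.range fun j => |(⟪X j, y⟫)|) lmax)
    (lam1 : ℝ) (hlam1 : 0 < lam1) (hlam1le : lam1 ≤ lmax)
    (θ1 : EuclideanSpace ℝ (Fin n))
    (hθ1mem : ∀ j, |(⟪X j, θ1⟫)| ≤ 1)
    (hθ1opt : ∀ θ : EuclideanSpace ℝ (Fin n), (∀ j, |(⟪X j, θ⟫)| ≤ 1) →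
      ‖θ1 - (1 / lam1) • y‖ ≤ ‖θ - (1 / lam1) • y‖)
    (γ : ℝ) (hγ : θ1 = γ • y) : γ = 1 / lmax := by
  have hlmaxpos : 0 < lmax := lt_of_lt_of_le hlam1 hlam1le
  obtain ⟨j0, hj0'⟩ := hlmax.1
  have hj0 : |(⟪X j0, y⟫)| = lmax := hj0'
  have hub : ∀ j, |(⟪X j, y⟫)| ≤ lmax := fun j => hlmax.2 ⟨j, rfl⟩
  -- γ ≤ 1/lmax
  have h1 : |γ| * lmax ≤ 1 := by
    have := hθ1mem j0
    rw [hγ, real_inner_smul_right, abs_mul, hj0] at this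
    exact this
  have hγle : γ ≤ 1 / lmax := by
    rw [le_div_iff₀ hlmaxpos]
    calc γ * lmax ≤ |γ| * lmax := by
          gcongr; exact le_abs_self γ
      _ ≤ 1 := h1
  -- candidate (1/lmax) • y is feasible
  have hC : ∀ j, |(⟪X j, (1 / lmax : ℝ) • y⟫)| ≤ 1 := by
    intro j
    rw [real_inner_smul_right, abs_mul, abs_of_pos (by positivity : (0:ℝ) < 1 / lmax)]
    rw [div_mul_eq_mul_div, one_mul, div_le_one hlmaxpos]
    exact hub j
  have hopt := hθ1opt _ hC
  rw [hγ, ← sub_smul, ← sub_smul, norm_smul, norm_smul] at hopt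
  have hynorm : 0 < ‖y‖ := norm_pos_iff.mpr hy
  have habs : |γ - 1 / lam1| ≤ |1 / lmax - 1 / lam1| :=
    le_of_mul_le_mul_right (by simpa using hopt) hynorm
  have hinv : 1 / lmax ≤ 1 / lam1 := one_div_le_one_div_of_le hlam1 hlam1le
  have habs2 : |1 / lmax - 1 / lam1| = 1 / lam1 - 1 / lmax := by
    rw [abs_sub_comm, abs_of_nonneg (by linarith)]
  rw [habs2] at habs
  have := abs_le.mp habs
  linarith [this.1]
end

section
/- Let y ≠ 0, 0 < λ₁ ≤ ‖Xᵀy‖_∞, and θ₁* the projection of y/λ₁ onto C = {θ : ‖Xᵀθ‖_∞ ≤ 1}. Then ⟨y/λ₁ - θ₁*, y⟩ ≥ 0, with equality if and only if λ₁ = ‖Xᵀy‖_∞. -/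
/-!
Write `v = y / λ₁` and `θ = θ₁*`, so that `y = λ₁ v`. Since `C` is convex and contains `0`, the
variational inequality of the projection tested at `0` gives `⟪v - θ, θ⟫ ≥ 0`, hence
`⟪v - θ, v⟫ = ‖v - θ‖² + ⟪v - θ, θ⟫ ≥ ‖v - θ‖² ≥ 0`, with equality only if `θ = v`. Finally
`θ = v` iff `v ∈ C`, and `v ∈ C` iff `‖Xᵀy‖_∞ ≤ λ₁`.
-/

open RealInnerProductSpace

variable {E ι : Type*} [NormedAddCommGroup E]

theorem IsMinOn.eq_iff_mem {K : Set E} {u v : E} (hv : v ∈ K)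
    (hmin : IsMinOn (fun w => ‖u - w‖) K v) : v = u ↔ u ∈ K := by
  refine ⟨fun h => h ▸ hv, fun hu => ?_⟩
  have h := isMinOn_iff.1 hmin u hu
  rw [sub_self, norm_zero, norm_le_zero_iff, sub_eq_zero] at h
  exact h.symm

variable [InnerProductSpace ℝ E]

def dualFeasible (X : ι → E) : Set E := {θ | ∀ j, |⟪X j, θ⟫| ≤ 1}

theorem zero_mem_dualFeasible (X : ι → E) : (0 : E) ∈ dualFeasible X := by
  simp [dualFeasible]

theorem convex_dualFeasible (X : ι → E) : Convex ℝ (dualFeasible X) := by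
  have h : dualFeasible X = ⋂ j, innerₛₗ ℝ (X j) ⁻¹' Metric.closedBall 0 1 := by
    ext θ; simp [dualFeasible]
  rw [h]
  exact convex_iInter fun j => (convex_closedBall 0 1).linear_preimage _

theorem smul_mem_dualFeasible_iff (X : ι → E) (y : E) {c : ℝ} (hc : 0 < c) :
    (1 / c) • y ∈ dualFeasible X ↔ ∀ j, |⟪X j, y⟫| ≤ c := by
  refine forall_congr' fun j => ?_
  rw [real_inner_smul_right, abs_mul, abs_of_pos (one_div_pos.2 hc), one_div, inv_mul_le_one₀ hc]

theorem IsMinOn.real_inner_sub_le_zero {K : Set E} (hK : Convex ℝ K) {u v : E} (hv : v ∈ K)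
    (hmin : IsMinOn (fun w => ‖u - w‖) K v) : ∀ w ∈ K, ⟪u - v, w - v⟫ ≤ 0 := by
  have : Nonempty K := ⟨⟨v, hv⟩⟩
  refine (norm_eq_iInf_iff_real_inner_le_zero hK hv).1 (le_antisymm ?_ ?_)
  · exact le_ciInf fun w => hmin w.2
  · exact ciInf_le (f := fun w : K => ‖u - w‖)
      ⟨0, by rintro _ ⟨w, rfl⟩; exact norm_nonneg _⟩ ⟨v, hv⟩

theorem real_inner_sub_nonneg_and_eq_zero_iff {u v : E} (h : 0 ≤ ⟪u - v, v⟫) :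
    0 ≤ ⟪u - v, u⟫ ∧ (⟪u - v, u⟫ = 0 ↔ v = u) := by
  have hsplit : ⟪u - v, u⟫ = ‖u - v‖ ^ 2 + ⟪u - v, v⟫ := by
    rw [← real_inner_self_eq_norm_sq, ← inner_add_right, sub_add_cancel]
  refine ⟨by rw [hsplit]; positivity, fun h0 => ?_,
    fun huv => by rw [huv, sub_self, inner_zero_left]⟩
  have hnorm : ‖u - v‖ ^ 2 = 0 := by linarith [sq_nonneg ‖u - v‖]
  rw [sq_eq_zero_iff, norm_eq_zero, sub_eq_zero] at hnorm
  exact hnorm.symm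

theorem stmt_8_general {n p : ℕ} (X : Fin p → EuclideanSpace ℝ (Fin n))
    (y : EuclideanSpace ℝ (Fin n)) (lmax : ℝ)
    (hlmax : IsGreatest (Set.range fun j => |(⟪X j, y⟫)|) lmax)
    (lam1 : ℝ) (hlam1 : 0 < lam1) (hlam1le : lam1 ≤ lmax)
    (θ1 : EuclideanSpace ℝ (Fin n))
    (hθ1mem : ∀ j, |(⟪X j, θ1⟫)| ≤ 1)
    (hθ1opt : ∀ θ : EuclideanSpace ℝ (Fin n), (∀ j, |(⟪X j, θ⟫)| ≤ 1) →
      ‖θ1 - (1 / lam1) • y‖ ≤ ‖θ - (1 / lam1) • y‖) :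
    ⟪(1 / lam1) • y - θ1, y⟫ ≥ 0 ∧ (⟪(1 / lam1) • y - θ1, y⟫ = 0 ↔ lam1 = lmax) := by
  set v := (1 / lam1) • y
  have hy : y = lam1 • v := by rw [smul_smul, mul_one_div_cancel hlam1.ne', one_smul]
  have hθ1C : θ1 ∈ dualFeasible X := hθ1mem
  have hmin : IsMinOn (fun w => ‖v - w‖) (dualFeasible X) θ1 := isMinOn_iff.2 fun θ hθ => by
    simpa only [norm_sub_rev v] using hθ1opt θ hθ
  have hθ1 : 0 ≤ ⟪v - θ1, θ1⟫ := by
    simpa [inner_neg_right] using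
      hmin.real_inner_sub_le_zero (convex_dualFeasible X) hθ1C 0 (zero_mem_dualFeasible X)
  have hv : v ∈ dualFeasible X ↔ lam1 = lmax := by
    rw [smul_mem_dualFeasible_iff X y hlam1, ← Set.forall_mem_range (p := (· ≤ lam1)),
      ← mem_upperBounds, ← isLUB_le_iff hlmax.isLUB]
    exact ⟨fun h => le_antisymm hlam1le h, fun h => h ▸ le_rfl⟩
  obtain ⟨hnonneg, hzero⟩ := real_inner_sub_nonneg_and_eq_zero_iff hθ1
  rw [hy, real_inner_smul_right, ← hv, ← hmin.eq_iff_mem hθ1C, ← hzero]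
  exact ⟨mul_nonneg hlam1.le hnonneg, mul_eq_zero_iff_left hlam1.ne'⟩

/-- Let `y ≠ 0`, `0 < λ₁ ≤ ‖Xᵀy‖_∞`, and `θ₁*` the projection of `y/λ₁` onto
`C = {θ : ‖Xᵀθ‖_∞ ≤ 1}`. Then `⟪y/λ₁ - θ₁*, y⟫ ≥ 0`, with equality iff
`λ₁ = ‖Xᵀy‖_∞`. -/
theorem stmt_8 {n p : ℕ} (X : Fin p → EuclideanSpace ℝ (Fin n))
    (y : EuclideanSpace ℝ (Fin n)) (hy : y ≠ 0) (lmax : ℝ)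
    (hlmax : IsGreatest (Set.range fun j => |(⟪X j, y⟫)|) lmax)
    (lam1 : ℝ) (hlam1 : 0 < lam1) (hlam1le : lam1 ≤ lmax)
    (θ1 : EuclideanSpace ℝ (Fin n))
    (hθ1mem : ∀ j, |(⟪X j, θ1⟫)| ≤ 1)
    (hθ1opt : ∀ θ : EuclideanSpace ℝ (Fin n), (∀ j, |(⟪X j, θ⟫)| ≤ 1) →
      ‖θ1 - (1 / lam1) • y‖ ≤ ‖θ - (1 / lam1) • y‖) :
    ⟪(1 / lam1) • y - θ1, y⟫ ≥ 0 ∧ (⟪(1 / lam1) • y - θ1, y⟫ = 0 ↔ lam1 = lmax) :=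
  stmt_8_general X y lmax hlmax lam1 hlam1 hlam1le θ1 hθ1mem hθ1opt
end

section
/- Let y ≠ 0, ‖Xᵀy‖_∞ ≥ λ₁ > λ₂ > 0, θ₁* the projection of y/λ₁ onto C = {θ : ‖Xᵀθ‖_∞ ≤ 1}, and set a = y/λ₁ - θ₁* and b = y/λ₂ - θ₁*. Then b ≠ 0, ⟨b, a⟩ ≥ 0, and ⟨b, a⟩ = 0 if and only if λ₁ = ‖Xᵀy‖_∞. Moreover, if λ₁ < ‖Xᵀy‖_∞ then a ≠ 0. -/
open RealInnerProductSpace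

/-- Theorem 1: with `y ≠ 0`, `‖Xᵀy‖_∞ ≥ λ₁ > λ₂ > 0`, `θ₁*` the projection of `y/λ₁`
onto `C = {θ : ‖Xᵀθ‖_∞ ≤ 1}`, `a = y/λ₁ - θ₁*`, `b = y/λ₂ - θ₁*`, we have `b ≠ 0`,
`⟪b, a⟫ ≥ 0` with equality iff `λ₁ = ‖Xᵀy‖_∞`; and if `λ₁ < ‖Xᵀy‖_∞` then `a ≠ 0`. -/
theorem stmt_9 {n p : ℕ} (X : Fin p → EuclideanSpace ℝ (Fin n))
    (y : EuclideanSpace ℝ (Fin n)) (hy : y ≠ 0) (lmax : ℝ)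
    (hlmax : IsGreatest (Set.range fun j => |(⟪X j, y⟫)|) lmax)
    (lam1 lam2 : ℝ) (hlam2 : 0 < lam2) (hlam12 : lam2 < lam1) (hlam1le : lam1 ≤ lmax)
    (θ1 : EuclideanSpace ℝ (Fin n))
    (hθ1mem : ∀ j, |(⟪X j, θ1⟫)| ≤ 1)
    (hθ1opt : ∀ θ : EuclideanSpace ℝ (Fin n), (∀ j, |(⟪X j, θ⟫)| ≤ 1) →
      ‖θ1 - (1 / lam1) • y‖ ≤ ‖θ - (1 / lam1) • y‖)
    (a b : EuclideanSpace ℝ (Fin n))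
    (ha : a = (1 / lam1) • y - θ1) (hb : b = (1 / lam2) • y - θ1) :
    b ≠ 0 ∧ ⟪b, a⟫ ≥ 0 ∧ (⟪b, a⟫ = 0 ↔ lam1 = lmax) ∧ (lam1 < lmax → a ≠ 0) := by
  have hlam1 : 0 < lam1 := hlam2.trans hlam12
  set v : EuclideanSpace ℝ (Fin n) := (1 / lam1) • y with hv
  -- Step 1: ⟪a, θ1⟫ ≥ 0, from the variational inequality with θ = (1-t)•θ1
  have hkey : 0 ≤ ⟪a, θ1⟫ := by
    by_contra h
    push_neg at h
    set c : ℝ := -⟪a, θ1⟫ with hc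
    have hcpos : 0 < c := by rw [hc]; linarith
    have hθ1ne : θ1 ≠ 0 := by
      rintro rfl
      simp [inner_zero_right] at h
    have hN : 0 < ‖θ1‖ ^ 2 := pow_pos (norm_pos_iff.mpr hθ1ne) 2
    set t : ℝ := min 1 (c / ‖θ1‖ ^ 2) with htdef
    have ht0 : 0 < t := lt_min one_pos (div_pos hcpos hN)
    have ht1 : t ≤ 1 := min_le_left _ _
    have htN : t * ‖θ1‖ ^ 2 ≤ c := by
      rw [← div_mul_cancel₀ c hN.ne']
      exact mul_le_mul_of_nonneg_right (min_le_right _ _) hN.le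
    have hmem : ∀ j, |(⟪X j, (1 - t) • θ1⟫)| ≤ 1 := by
      intro j
      rw [real_inner_smul_right, abs_mul]
      calc |1 - t| * |(⟪X j, θ1⟫)| ≤ 1 * 1 := by
            apply mul_le_mul _ (hθ1mem j) (abs_nonneg _) zero_le_one
            rw [abs_le]; constructor <;> linarith
        _ = 1 := one_mul 1
    have hle := hθ1opt ((1 - t) • θ1) hmem
    have hrw : (1 - t) • θ1 - v = (θ1 - v) - t • θ1 := by
      rw [sub_smul, one_smul]; abel
    rw [hrw] at hle
    have hsq : ‖θ1 - v‖ ^ 2 ≤ ‖(θ1 - v) - t • θ1‖ ^ 2 := by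
      exact pow_le_pow_left₀ (norm_nonneg _) hle 2
    rw [norm_sub_sq_real (θ1 - v) (t • θ1)] at hsq
    have hinner : ⟪θ1 - v, t • θ1⟫ = t * c := by
      rw [real_inner_smul_right]
      have : (⟪θ1 - v, θ1⟫) = -⟪a, θ1⟫ := by
        rw [ha]; rw [← inner_neg_left]; congr 1; abel
      rw [this, ← hc]
    have hns : ‖t • θ1‖ ^ 2 = t ^ 2 * ‖θ1‖ ^ 2 := by
      rw [norm_smul]; simp [abs_of_pos ht0]; ring
    rw [hinner, hns] at hsq
    nlinarith [mul_pos ht0 hcpos]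
  have hva : v = a + θ1 := by rw [ha]; abel
  have hay : 0 ≤ ⟪a, y⟫ := by
    have hyv : y = lam1 • v := by
      rw [hv, smul_smul, mul_one_div, div_self hlam1.ne', one_smul]
    rw [hyv, real_inner_smul_right, hva, inner_add_right]
    have h1 : 0 ≤ ⟪a, a⟫ := real_inner_self_nonneg
    nlinarith
  set cc : ℝ := 1 / lam2 - 1 / lam1 with hcc
  have hccpos : 0 < cc := by
    have := one_div_lt_one_div_of_lt hlam2 hlam12
    rw [hcc]; linarith
  have hb' : b = a + cc • y := by
    rw [ha, hb, hcc, sub_smul]; abel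
  have hba : ⟪b, a⟫ = ⟪a, a⟫ + cc * ⟪a, y⟫ := by
    rw [hb', inner_add_left, real_inner_smul_left, real_inner_comm y a]
  have hanonneg : 0 ≤ ⟪a, a⟫ := real_inner_self_nonneg
  have hbanonneg : (0:ℝ) ≤ ⟪b, a⟫ := by
    rw [hba]; nlinarith
  -- a = 0 → lmax ≤ lam1
  have hzero_imp : a = 0 → lmax ≤ lam1 := by
    intro h0
    have hθv : θ1 = v := by
      have : v - θ1 = 0 := by rw [← ha, h0]
      have := sub_eq_zero.mp this
      exact this.symm
    obtain ⟨j0, hj0⟩ := hlmax.1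
    have hj0' : |(⟪X j0, y⟫)| = lmax := hj0
    have := hθ1mem j0
    rw [hθv, hv, real_inner_smul_right, abs_mul, abs_of_pos (by positivity : (0:ℝ) < 1 / lam1), hj0'] at this
    rw [div_mul_eq_mul_div, one_mul, div_le_one hlam1] at this
    exact this
  -- lam1 = lmax → a = 0
  have himp_zero : lam1 = lmax → a = 0 := by
    intro heq
    have hmemv : ∀ j, |(⟪X j, v⟫)| ≤ 1 := by
      intro j
      rw [hv, real_inner_smul_right, abs_mul, abs_of_pos (by positivity : (0:ℝ) < 1 / lam1)]
      have hub : |(⟪X j, y⟫)| ≤ lmax := hlmax.2 ⟨j, rfl⟩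
      rw [div_mul_eq_mul_div, one_mul, div_le_one hlam1, heq]
      exact hub
    have := hθ1opt v hmemv
    simp only [← hv, sub_self, norm_zero] at this
    have hn0 : θ1 - v = 0 := by
      rw [← norm_le_zero_iff]; exact this
    rw [ha, ← neg_sub θ1 v, hn0, neg_zero]
  refine ⟨?_, hbanonneg, ⟨?_, ?_⟩, ?_⟩
  · -- b ≠ 0
    intro hb0
    have hby : ⟪b, y⟫ = ⟪a, y⟫ + cc * ⟪y, y⟫ := by
      rw [hb', inner_add_left, real_inner_smul_left]
    have hyy : (0:ℝ) < ⟪y, y⟫ := by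
      rw [real_inner_self_eq_norm_sq]
      exact pow_pos (norm_pos_iff.mpr hy) 2
    have : (0:ℝ) < ⟪b, y⟫ := by rw [hby]; nlinarith
    rw [hb0, inner_zero_left] at this
    exact lt_irrefl _ this
  · -- ⟪b,a⟫ = 0 → lam1 = lmax
    intro h0
    have ha0 : ⟪a, a⟫ = 0 := by
      have h2 : 0 ≤ cc * ⟪a, y⟫ := mul_nonneg hccpos.le hay
      rw [hba] at h0; linarith
    have : a = 0 := inner_self_eq_zero.mp ha0
    exact le_antisymm hlam1le (hzero_imp this)
  · -- lam1 = lmax → ⟪b,a⟫ = 0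
    intro heq
    rw [himp_zero heq, inner_zero_right]
  · -- lam1 < lmax → a ≠ 0
    intro hlt h0
    exact absurd (hzero_imp h0) (not_le.mpr hlt)
end

section
/- Let a, b, x be vectors in ℝ^n with x ≠ 0, b ≠ 0, ⟨a, b⟩ ≥ 0. Consider min over r of ⟨x, r⟩ subject to ⟨a, r + b⟩ ≤ 0 and ‖r‖₂² ≤ ‖b‖₂². If a = 0, or if a ≠ 0 and ⟨b,a⟩/‖b‖₂ ≤ ⟨x,a⟩/‖x‖₂, the minimum value is -‖x‖₂‖b‖₂; otherwise (a ≠ 0 and ⟨b,a⟩/‖b‖₂ > ⟨x,a⟩/‖x‖₂) the minimum value is -‖x^⊥‖₂ √(‖b‖₂² - ⟨b,a⟩²/‖a‖₂²) - ⟨a,b⟩⟨x,a⟩/‖a‖₂², where x^⊥ = x - a⟨x,a⟩/‖a‖₂². -/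
open RealInnerProductSpace

/-!
Write `x = x^⊥ + (⟪x, a⟫ / ‖a‖²) a`. Without the halfspace, `⟪x, ·⟫` is minimized on the ball at
`-(‖b‖ / ‖x‖) x` with value `-‖x‖ ‖b‖`, and the two cases of the theorem are exactly whether this
point satisfies `⟪a, r + b⟫ ≤ 0`. If it does not, every feasible `r` can be moved along the segment
towards it, without increasing `⟪x, r⟫`, until it reaches the hyperplane `⟪a, r⟫ = -⟪a, b⟫`. On
that hyperplane `⟪x, r⟫ = ⟪x^⊥, r^⊥⟫ - ⟪a, b⟫ ⟪x, a⟫ / ‖a‖²` with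
`‖r^⊥‖² ≤ ‖b‖² - ⟪b, a⟫² / ‖a‖²`, and Cauchy–Schwarz gives the bound, attained at `r^⊥ ∥ -x^⊥`.
-/

theorem Convex.exists_mem_eq_of_lt_of_le {E : Type*} [AddCommGroup E] [Module ℝ E] {K : Set E}
    (hK : Convex ℝ K) (f g : E →ₗ[ℝ] ℝ) {c : ℝ} {z r : E} (hz : z ∈ K) (hr : r ∈ K)
    (hgz : c < g z) (hgr : g r ≤ c) (hf : f z ≤ f r) :
    ∃ r' ∈ K, g r' = c ∧ f r' ≤ f r := by
  set θ := (c - g r) / (g z - g r)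
  have hθ : θ ∈ Set.Icc (0 : ℝ) 1 :=
    ⟨div_nonneg (by linarith) (by linarith), div_le_one_of_le₀ (by linarith) (by linarith)⟩
  refine ⟨r + θ • (z - r), hK.add_smul_sub_mem hr hz hθ, ?_, ?_⟩
  · simp only [map_add, map_smul, map_sub, smul_eq_mul, θ]
    field_simp [(by linarith : g z - g r ≠ 0)]
    ring
  · simp only [map_add, map_smul, map_sub, smul_eq_mul]
    nlinarith [hθ.1]

section

variable {E : Type*} [NormedAddCommGroup E] [InnerProductSpace ℝ E]

/-- At `x = 0` this is `0` (as `ρ / 0 = 0`), still a minimizer of `⟪x, ·⟫` on the ball. -/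
noncomputable def ballArgmin (x : E) (ρ : ℝ) : E := -(ρ / ‖x‖) • x

theorem norm_ballArgmin_le (x : E) {ρ : ℝ} (hρ : 0 ≤ ρ) : ‖ballArgmin x ρ‖ ≤ ρ := by
  rcases eq_or_ne x 0 with rfl | hx
  · simpa [ballArgmin] using hρ
  rw [ballArgmin, norm_smul, norm_neg, Real.norm_of_nonneg (by positivity),
    div_mul_cancel₀ _ (norm_ne_zero_iff.mpr hx)]

theorem inner_ballArgmin (x : E) (ρ : ℝ) : ⟪x, ballArgmin x ρ⟫ = -(‖x‖ * ρ) := by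
  rcases eq_or_ne x 0 with rfl | hx
  · simp
  rw [ballArgmin, real_inner_smul_right, real_inner_self_eq_norm_sq]
  field_simp

theorem inner_ballArgmin_le (x : E) {ρ : ℝ} {r : E} (hr : ‖r‖ ≤ ρ) :
    ⟪x, ballArgmin x ρ⟫ ≤ ⟪x, r⟫ := by
  rw [inner_ballArgmin]
  calc -(‖x‖ * ρ) ≤ -(‖x‖ * ‖r‖) := by gcongr
    _ ≤ ⟪x, r⟫ := neg_le_of_abs_le (abs_real_inner_le_norm x r)

theorem inner_ballArgmin_add {b : E} (a x : E) (hb : b ≠ 0) :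
    ⟪a, ballArgmin x ‖b‖ + b⟫ = ‖b‖ * (⟪b, a⟫ / ‖b‖ - ⟪x, a⟫ / ‖x‖) := by
  have : ‖b‖ ≠ 0 := norm_ne_zero_iff.mpr hb
  rw [inner_add_right, ballArgmin, real_inner_smul_right, real_inner_comm a b, real_inner_comm a x]
  field_simp
  ring

/-- The paper's `v^⊥`. -/
noncomputable def rejection (a v : E) : E := v - (⟪v, a⟫ / ‖a‖ ^ 2) • a

theorem inner_rejection_self (a v : E) : ⟪rejection a v, a⟫ = 0 := by
  rcases eq_or_ne a 0 with rfl | ha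
  · simp
  have : ‖a‖ ≠ 0 := norm_ne_zero_iff.mpr ha
  rw [rejection, inner_sub_left, real_inner_smul_left, real_inner_self_eq_norm_sq]
  field_simp
  ring

theorem norm_rejection_sq (a v : E) : ‖rejection a v‖ ^ 2 = ‖v‖ ^ 2 - ⟪v, a⟫ ^ 2 / ‖a‖ ^ 2 := by
  rcases eq_or_ne a 0 with rfl | ha
  · simp [rejection]
  have : ‖a‖ ≠ 0 := norm_ne_zero_iff.mpr ha
  rw [rejection, norm_sub_sq_real, real_inner_smul_right, norm_smul, Real.norm_eq_abs, mul_pow,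
    sq_abs]
  field_simp
  ring

theorem inner_rejection_rejection (a x r : E) :
    ⟪rejection a x, rejection a r⟫ = ⟪rejection a x, r⟫ := by
  nth_rw 2 [rejection]
  rw [inner_sub_right, real_inner_smul_right, inner_rejection_self, mul_zero,
    sub_zero]

theorem inner_eq_inner_rejection_add (a x r : E) :
    ⟪x, r⟫ = ⟪rejection a x, r⟫ + ⟪x, a⟫ * ⟪a, r⟫ / ‖a‖ ^ 2 := by
  rw [rejection, inner_sub_left, real_inner_smul_left]
  ring

theorem inner_sq_div_norm_sq_le (a b : E) : ⟪b, a⟫ ^ 2 / ‖a‖ ^ 2 ≤ ‖b‖ ^ 2 := by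
  refine div_le_of_le_mul₀ (by positivity) (by positivity) ?_
  rw [← mul_pow, ← sq_abs]
  exact pow_le_pow_left₀ (abs_nonneg _) (abs_real_inner_le_norm b a) 2

theorem le_inner_of_inner_eq_neg {a b r : E} (x : E) (hr : ⟪a, r⟫ = -⟪a, b⟫)
    (hrb : ‖r‖ ^ 2 ≤ ‖b‖ ^ 2) :
    -(‖rejection a x‖ * √(‖b‖ ^ 2 - ⟪b, a⟫ ^ 2 / ‖a‖ ^ 2)) - ⟪a, b⟫ * ⟪x, a⟫ / ‖a‖ ^ 2
      ≤ ⟪x, r⟫ := by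
  have hrej : ‖rejection a r‖ ≤ √(‖b‖ ^ 2 - ⟪b, a⟫ ^ 2 / ‖a‖ ^ 2) := by
    refine (Real.le_sqrt (norm_nonneg _) (sub_nonneg.2 (inner_sq_div_norm_sq_le a b))).2 ?_
    rw [norm_rejection_sq, real_inner_comm a r, hr, neg_sq, real_inner_comm]
    linarith
  have hCS : -(‖rejection a x‖ * ‖rejection a r‖) ≤ ⟪rejection a x, rejection a r⟫ :=
    neg_le_of_abs_le (abs_real_inner_le_norm _ _)
  have hmul := mul_le_mul_of_nonneg_left hrej (norm_nonneg (rejection a x))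
  rw [inner_eq_inner_rejection_add a x r, ← inner_rejection_rejection, hr, mul_neg, neg_div,
    mul_comm ⟪x, a⟫]
  linarith

theorem exists_inner_add_eq_zero_and_inner_eq {a : E} (b x : E) (ha : a ≠ 0) :
    ∃ r : E, ⟪a, r + b⟫ = 0 ∧ ‖r‖ ^ 2 ≤ ‖b‖ ^ 2 ∧
      ⟪x, r⟫ = -(‖rejection a x‖ * √(‖b‖ ^ 2 - ⟪b, a⟫ ^ 2 / ‖a‖ ^ 2))
        - ⟪a, b⟫ * ⟪x, a⟫ / ‖a‖ ^ 2 := by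
  set w := √(‖b‖ ^ 2 - ⟪b, a⟫ ^ 2 / ‖a‖ ^ 2)
  set p := rejection a x
  have hw : w ^ 2 = ‖b‖ ^ 2 - ⟪b, a⟫ ^ 2 / ‖a‖ ^ 2 :=
    Real.sq_sqrt (sub_nonneg.2 (inner_sq_div_norm_sq_le a b))
  have ha' : ‖a‖ ≠ 0 := norm_ne_zero_iff.mpr ha
  have hpa : ⟪p, a⟫ = 0 := inner_rejection_self a x
  have hap : ⟪a, p⟫ = 0 := by rw [real_inner_comm, hpa]
  have hxp : ⟪x, p⟫ = ‖p‖ ^ 2 := by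
    rw [real_inner_comm, ← inner_rejection_rejection, real_inner_self_eq_norm_sq]
  have hwp : w / ‖p‖ * ‖p‖ ^ 2 = ‖p‖ * w := by
    rcases eq_or_ne ‖p‖ 0 with hp | hp
    · simp [hp]
    · field_simp
  refine ⟨-(w / ‖p‖) • p - (⟪a, b⟫ / ‖a‖ ^ 2) • a, ?_, ?_, ?_⟩
  · rw [inner_add_right, inner_sub_right, real_inner_smul_right, real_inner_smul_right,
      hap, real_inner_self_eq_norm_sq]
    field_simp
    ring
  · rw [norm_sub_sq_real, real_inner_smul_left, real_inner_smul_right, hpa, norm_smul, norm_smul,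
      Real.norm_eq_abs, Real.norm_eq_abs, mul_pow, mul_pow, sq_abs, sq_abs]
    have hpw : (-(w / ‖p‖)) ^ 2 * ‖p‖ ^ 2 ≤ w ^ 2 := by
      rcases eq_or_ne ‖p‖ 0 with hp | hp
      · simp [hp, sq_nonneg]
      · exact le_of_eq (by field_simp)
    have hab : (⟪a, b⟫ / ‖a‖ ^ 2) ^ 2 * ‖a‖ ^ 2 = ⟪b, a⟫ ^ 2 / ‖a‖ ^ 2 := by
      rw [real_inner_comm]
      field_simp
    linarith
  · rw [inner_sub_right, real_inner_smul_right, real_inner_smul_right, hxp, neg_mul,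
      hwp]
    ring

theorem le_inner_of_inner_ballArgmin_add_pos {a b x r : E} (hz : 0 < ⟪a, ballArgmin x ‖b‖ + b⟫)
    (hr : ⟪a, r + b⟫ ≤ 0) (hrb : ‖r‖ ^ 2 ≤ ‖b‖ ^ 2) :
    -(‖rejection a x‖ * √(‖b‖ ^ 2 - ⟪b, a⟫ ^ 2 / ‖a‖ ^ 2)) - ⟪a, b⟫ * ⟪x, a⟫ / ‖a‖ ^ 2
      ≤ ⟪x, r⟫ := by
  rw [inner_add_right] at hz hr
  have hrb' : r ∈ Metric.closedBall 0 ‖b‖ := by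
    rwa [mem_closedBall_zero_iff, ← sq_le_sq₀ (norm_nonneg r) (norm_nonneg b)]
  obtain ⟨r', hr'b, hr'a, hr'x⟩ := (convex_closedBall 0 ‖b‖).exists_mem_eq_of_lt_of_le
    (innerₛₗ ℝ x) (innerₛₗ ℝ a) (c := -⟪a, b⟫)
    (mem_closedBall_zero_iff.2 (norm_ballArgmin_le x (norm_nonneg b))) hrb'
    (by simp only [innerₛₗ_apply_apply]; linarith) (by simp only [innerₛₗ_apply_apply]; linarith)
    (inner_ballArgmin_le x (mem_closedBall_zero_iff.1 hrb'))
  simp only [innerₛₗ_apply_apply] at hr'a hr'x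
  rw [mem_closedBall_zero_iff, ← sq_le_sq₀ (norm_nonneg r') (norm_nonneg b)] at hr'b
  exact (le_inner_of_inner_eq_neg x hr'a hr'b).trans hr'x

end

theorem stmt_10_general {n : ℕ} (a b x : EuclideanSpace ℝ (Fin n))
    (hb : b ≠ 0) :
    ((a = 0 ∨ (a ≠ 0 ∧ ⟪b, a⟫ / ‖b‖ ≤ ⟪x, a⟫ / ‖x‖)) →
      IsLeast {v : ℝ | ∃ r : EuclideanSpace ℝ (Fin n),
          ⟪a, r + b⟫ ≤ 0 ∧ ‖r‖ ^ 2 ≤ ‖b‖ ^ 2 ∧ v = ⟪x, r⟫}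
        (-(‖x‖ * ‖b‖))) ∧
    ((a ≠ 0 ∧ ⟪b, a⟫ / ‖b‖ > ⟪x, a⟫ / ‖x‖) →
      IsLeast {v : ℝ | ∃ r : EuclideanSpace ℝ (Fin n),
          ⟪a, r + b⟫ ≤ 0 ∧ ‖r‖ ^ 2 ≤ ‖b‖ ^ 2 ∧ v = ⟪x, r⟫}
        (-(‖x - (⟪x, a⟫ / ‖a‖ ^ 2) • a‖ * Real.sqrt (‖b‖ ^ 2 - ⟪b, a⟫ ^ 2 / ‖a‖ ^ 2))
          - ⟪a, b⟫ * ⟪x, a⟫ / ‖a‖ ^ 2)) := by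
  have hB : 0 < ‖b‖ := norm_pos_iff.mpr hb
  have hz : ⟪a, ballArgmin x ‖b‖ + b⟫ = ‖b‖ * (⟪b, a⟫ / ‖b‖ - ⟪x, a⟫ / ‖x‖) :=
    inner_ballArgmin_add a x hb
  constructor
  · intro hcase
    have hzb := norm_ballArgmin_le x hB.le
    refine ⟨⟨ballArgmin x ‖b‖, ?_, pow_le_pow_left₀ (norm_nonneg _) hzb 2,
      (inner_ballArgmin x ‖b‖).symm⟩, ?_⟩
    · rcases hcase with rfl | ⟨-, hle⟩
      · simp
      · rw [hz]
        exact mul_nonpos_of_nonneg_of_nonpos hB.le (sub_nonpos.2 hle)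
    · rintro _ ⟨r, -, hrb, rfl⟩
      rw [← inner_ballArgmin x ‖b‖]
      exact inner_ballArgmin_le x ((sq_le_sq₀ (norm_nonneg r) hB.le).1 hrb)
  · rintro ⟨ha, hgt⟩
    obtain ⟨r₀, hr₀, hr₀b, hr₀x⟩ := exists_inner_add_eq_zero_and_inner_eq b x ha
    refine ⟨⟨r₀, hr₀.le, hr₀b, hr₀x.symm⟩, ?_⟩
    rintro _ ⟨r, hr, hrb, rfl⟩
    exact le_inner_of_inner_ballArgmin_add_pos (hz ▸ mul_pos hB (sub_pos.2 hgt)) hr hrb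

/-- Theorem 2 (closed form for the linear minimization over halfspace ∩ ball):
for `x ≠ 0`, `b ≠ 0`, `⟪a, b⟫ ≥ 0`, the minimum of `⟪x, r⟫` over
`{r : ⟪a, r + b⟫ ≤ 0, ‖r‖² ≤ ‖b‖²}` is `-‖x‖‖b‖` when `a = 0` or
`⟪b,a⟫/‖b‖ ≤ ⟪x,a⟫/‖x‖`, and otherwise equals
`-‖x^⊥‖ √(‖b‖² - ⟪b,a⟫²/‖a‖²) - ⟪a,b⟫⟪x,a⟫/‖a‖²` with `x^⊥ = x - (⟪x,a⟫/‖a‖²) • a`. -/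
theorem stmt_10 {n : ℕ} (a b x : EuclideanSpace ℝ (Fin n))
    (hx : x ≠ 0) (hb : b ≠ 0) (hab : ⟪a, b⟫ ≥ 0) :
    ((a = 0 ∨ (a ≠ 0 ∧ ⟪b, a⟫ / ‖b‖ ≤ ⟪x, a⟫ / ‖x‖)) →
      IsLeast {v : ℝ | ∃ r : EuclideanSpace ℝ (Fin n),
          ⟪a, r + b⟫ ≤ 0 ∧ ‖r‖ ^ 2 ≤ ‖b‖ ^ 2 ∧ v = ⟪x, r⟫}
        (-(‖x‖ * ‖b‖))) ∧
    ((a ≠ 0 ∧ ⟪b, a⟫ / ‖b‖ > ⟪x, a⟫ / ‖x‖) →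
      IsLeast {v : ℝ | ∃ r : EuclideanSpace ℝ (Fin n),
          ⟪a, r + b⟫ ≤ 0 ∧ ‖r‖ ^ 2 ≤ ‖b‖ ^ 2 ∧ v = ⟪x, r⟫}
        (-(‖x - (⟪x, a⟫ / ‖a‖ ^ 2) • a‖ * Real.sqrt (‖b‖ ^ 2 - ⟪b, a⟫ ^ 2 / ‖a‖ ^ 2))
          - ⟪a, b⟫ * ⟪x, a⟫ / ‖a‖ ^ 2)) :=
  stmt_10_general a b x hb
end

section
/- Let a, b ∈ ℝ^n with a ≠ 0. If ⟨b,a⟩/‖b‖₂ > |⟨x,a⟩|/‖x‖₂ for a nonzero x ∈ ℝ^n, then max over r with ⟨a, r + b⟩ ≤ 0 and ‖r‖₂² ≤ ‖b‖₂² of ⟨x, r⟩ equals ‖x^⊥‖₂ √(‖b‖₂² - ⟨b,a⟩²/‖a‖₂²) - ⟨a,b⟩⟨x,a⟩/‖a‖₂², where x^⊥ = x - a⟨x,a⟩/‖a‖₂². -/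
/-!
Write `x = x^⊥ + (⟪x, a⟫ / ‖a‖²) a` and let `D` be the radius of the circle in which the
hyperplane `⟪a, r⟫ = -⟪a, b⟫` meets the sphere `‖r‖ = ‖b‖`. The candidate maximizer
`r₀ = (D / ‖x^⊥‖) x^⊥ - (⟪a, b⟫ / ‖a‖²) a` lies on both boundaries, and the angle condition is
equivalent to `|⟪x, a⟫| D < ⟪a, b⟫ ‖x^⊥‖`, which says precisely that `x` is a nonnegative
combination of the outer normals `r₀` and `a` of the two active constraints (KKT). Such a
combination is maximized over the feasible set at `r₀`. If `D = 0` the feasible set is `{r₀}`.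
-/

open RealInnerProductSpace

section
variable {F : Type*} [NormedAddCommGroup F] [InnerProductSpace ℝ F]

noncomputable def orthComponent (a x : F) : F := x - (⟪x, a⟫ / ‖a‖ ^ 2) • a

lemma orthComponent_add_smul (a x : F) : orthComponent a x + (⟪x, a⟫ / ‖a‖ ^ 2) • a = x :=
  sub_add_cancel _ _

lemma inner_orthComponent_eq_zero (a x : F) : ⟪a, orthComponent a x⟫ = 0 := by
  rcases eq_or_ne a 0 with rfl | ha
  · simp
  have : ‖a‖ ≠ 0 := norm_ne_zero_iff.2 ha
  rw [orthComponent, inner_sub_right, real_inner_smul_right, real_inner_self_eq_norm_sq,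
    real_inner_comm]
  field_simp
  ring

lemma inner_orthComponent_eq_norm_sq (a x : F) :
    ⟪x, orthComponent a x⟫ = ‖orthComponent a x‖ ^ 2 := by
  nth_rewrite 1 [← orthComponent_add_smul a x]
  rw [inner_add_left, real_inner_smul_left, inner_orthComponent_eq_zero, mul_zero, add_zero,
    real_inner_self_eq_norm_sq]

lemma norm_orthComponent_sq (a x : F) (ha : a ≠ 0) :
    ‖orthComponent a x‖ ^ 2 = ‖x‖ ^ 2 - ⟪x, a⟫ ^ 2 / ‖a‖ ^ 2 := by
  have : ‖a‖ ≠ 0 := norm_ne_zero_iff.2 ha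
  rw [orthComponent, norm_sub_sq_real, real_inner_smul_right, norm_smul, Real.norm_eq_abs,
    mul_pow, sq_abs]
  field_simp
  ring

/-- The radius of the circle in which the hyperplane `⟪a, r⟫ = -⟪a, b⟫` cuts the sphere
`‖r‖ = ‖b‖`. -/
noncomputable def sliceRadius (a b : F) : ℝ := √(‖b‖ ^ 2 - ⟪a, b⟫ ^ 2 / ‖a‖ ^ 2)

lemma sliceRadius_nonneg (a b : F) : 0 ≤ sliceRadius a b := Real.sqrt_nonneg _

lemma sliceRadius_sq (a b : F) : sliceRadius a b ^ 2 = ‖b‖ ^ 2 - ⟪a, b⟫ ^ 2 / ‖a‖ ^ 2 := by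
  refine Real.sq_sqrt (sub_nonneg.2 (div_le_of_le_mul₀ (by positivity) (by positivity) ?_))
  calc ⟪a, b⟫ ^ 2 = |⟪a, b⟫| ^ 2 := (sq_abs _).symm
    _ ≤ (‖a‖ * ‖b‖) ^ 2 := by gcongr; exact abs_real_inner_le_norm a b
    _ = ‖b‖ ^ 2 * ‖a‖ ^ 2 := by ring

variable {a b x : F}

lemma abs_inner_mul_sliceRadius_lt (hangle : |⟪x, a⟫| * ‖b‖ < ⟪a, b⟫ * ‖x‖) :
    |⟪x, a⟫| * sliceRadius a b < ⟪a, b⟫ * ‖orthComponent a x‖ := by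
  have hc : 0 < ⟪a, b⟫ :=
    pos_of_mul_pos_left ((by positivity : 0 ≤ |⟪x, a⟫| * ‖b‖).trans_lt hangle) (norm_nonneg x)
  have ha : a ≠ 0 := by rintro rfl; simp at hc
  refine lt_of_pow_lt_pow_left₀ 2 (by positivity) ?_
  have hsq : (|⟪x, a⟫| * ‖b‖) ^ 2 < (⟪a, b⟫ * ‖x‖) ^ 2 :=
    pow_lt_pow_left₀ hangle (by positivity) two_ne_zero
  have : ‖a‖ ≠ 0 := norm_ne_zero_iff.2 ha
  rw [mul_pow, mul_pow, sq_abs] at hsq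
  rw [mul_pow, mul_pow, sq_abs, sliceRadius_sq, norm_orthComponent_sq a x ha]
  field_simp
  nlinarith [mul_lt_mul_of_pos_left hsq (by positivity : 0 < ‖a‖ ^ 2)]

lemma pos_of_abs_inner_mul_sliceRadius_lt
    (h : |⟪x, a⟫| * sliceRadius a b < ⟪a, b⟫ * ‖orthComponent a x‖) :
    0 < ⟪a, b⟫ ∧ 0 < ‖orthComponent a x‖ := by
  have hprod := (mul_nonneg (abs_nonneg _) (sliceRadius_nonneg a b)).trans_lt h
  have hc := pos_of_mul_pos_left hprod (norm_nonneg _)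
  exact ⟨hc, pos_of_mul_pos_right hprod hc.le⟩

noncomputable def halfspaceBallMaximizer (a b x : F) : F :=
  (sliceRadius a b / ‖orthComponent a x‖) • orthComponent a x - (⟪a, b⟫ / ‖a‖ ^ 2) • a

lemma inner_halfspaceBallMaximizer_left (ha : a ≠ 0) :
    ⟪a, halfspaceBallMaximizer a b x⟫ = -⟪a, b⟫ := by
  have : ‖a‖ ≠ 0 := norm_ne_zero_iff.2 ha
  rw [halfspaceBallMaximizer, inner_sub_right, real_inner_smul_right, real_inner_smul_right,
    inner_orthComponent_eq_zero, real_inner_self_eq_norm_sq]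
  field_simp
  ring

lemma norm_halfspaceBallMaximizer (ha : a ≠ 0) (hw : orthComponent a x ≠ 0) :
    ‖halfspaceBallMaximizer a b x‖ = ‖b‖ := by
  have : ‖a‖ ≠ 0 := norm_ne_zero_iff.2 ha
  have : ‖orthComponent a x‖ ≠ 0 := norm_ne_zero_iff.2 hw
  refine (sq_eq_sq₀ (norm_nonneg _) (norm_nonneg _)).1 ?_
  rw [halfspaceBallMaximizer, norm_sub_sq_real, norm_smul, norm_smul, real_inner_smul_left,
    real_inner_smul_right, real_inner_comm a, inner_orthComponent_eq_zero, Real.norm_eq_abs,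
    Real.norm_eq_abs, mul_pow, mul_pow, sq_abs, sq_abs, div_pow, sliceRadius_sq]
  field_simp
  ring

lemma inner_halfspaceBallMaximizer (ha : a ≠ 0) (hw : orthComponent a x ≠ 0) :
    ⟪x, halfspaceBallMaximizer a b x⟫
      = ‖orthComponent a x‖ * sliceRadius a b - ⟪a, b⟫ * ⟪x, a⟫ / ‖a‖ ^ 2 := by
  have : ‖a‖ ≠ 0 := norm_ne_zero_iff.2 ha
  have : ‖orthComponent a x‖ ≠ 0 := norm_ne_zero_iff.2 hw
  rw [halfspaceBallMaximizer, inner_sub_right, real_inner_smul_right, real_inner_smul_right,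
    inner_orthComponent_eq_norm_sq]
  field_simp

lemma inner_smul_add_smul_le {r₀ a r : F} {l m : ℝ} (hl : 0 ≤ l) (hm : 0 ≤ m)
    (hr : ‖r‖ ≤ ‖r₀‖) (har : ⟪a, r⟫ ≤ ⟪a, r₀⟫) :
    ⟪l • r₀ + m • a, r⟫ ≤ ⟪l • r₀ + m • a, r₀⟫ := by
  have hr₀r : ⟪r₀, r⟫ ≤ ⟪r₀, r₀⟫ := calc
    ⟪r₀, r⟫ ≤ ‖r₀‖ * ‖r‖ := real_inner_le_norm r₀ r
    _ ≤ ‖r₀‖ * ‖r₀‖ := by gcongr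
    _ = ⟪r₀, r₀⟫ := (real_inner_self_eq_norm_mul_norm r₀).symm
  simp only [inner_add_left, real_inner_smul_left]
  gcongr

lemma eq_of_norm_le_of_inner_self_le {r₀ r : F} (hr : ‖r‖ ≤ ‖r₀‖) (h : ⟪r₀, r₀⟫ ≤ ⟪r₀, r⟫) :
    r = r₀ := by
  rw [real_inner_self_eq_norm_sq] at h
  have : ‖r - r₀‖ ^ 2 ≤ 0 := by
    rw [norm_sub_sq_real, real_inner_comm]
    nlinarith [norm_nonneg r]
  exact sub_eq_zero.1 (norm_eq_zero.1 (pow_eq_zero_iff two_ne_zero |>.1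
    (le_antisymm this (sq_nonneg _))))

lemma inner_le_inner_halfspaceBallMaximizer {r : F}
    (hkkt : |⟪x, a⟫| * sliceRadius a b < ⟪a, b⟫ * ‖orthComponent a x‖)
    (har : ⟪a, r⟫ ≤ -⟪a, b⟫) (hr : ‖r‖ ≤ ‖b‖) :
    ⟪x, r⟫ ≤ ⟪x, halfspaceBallMaximizer a b x⟫ := by
  obtain ⟨hc, hw⟩ := pos_of_abs_inner_mul_sliceRadius_lt hkkt
  have ha : a ≠ 0 := by rintro rfl; simp at hc
  set r₀ := halfspaceBallMaximizer a b x
  have har₀ : ⟪a, r⟫ ≤ ⟪a, r₀⟫ := by rwa [inner_halfspaceBallMaximizer_left ha]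
  have hr₀ : ‖r‖ ≤ ‖r₀‖ := by rwa [norm_halfspaceBallMaximizer ha (norm_pos_iff.1 hw)]
  rcases (sliceRadius_nonneg a b).eq_or_lt with hD | hD
  · -- `r₀` is a negative multiple of `a`, and the hyperplane only touches the ball there.
    have hr₀a : ∀ y, ⟪r₀, y⟫ = -(⟪a, b⟫ / ‖a‖ ^ 2) * ⟪a, y⟫ := fun y => by
      simp only [r₀, halfspaceBallMaximizer, ← hD, zero_div, zero_smul, zero_sub,
        inner_neg_left, real_inner_smul_left, neg_mul]
    rw [eq_of_norm_le_of_inner_self_le hr₀ (by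
      rw [hr₀a, hr₀a]; exact mul_le_mul_of_nonpos_left har₀ (neg_nonpos.2 (by positivity)))]
  · have : ‖a‖ ≠ 0 := norm_ne_zero_iff.2 ha
    have hx : x = (‖orthComponent a x‖ / sliceRadius a b) • r₀
        + ((⟪x, a⟫ * sliceRadius a b + ⟪a, b⟫ * ‖orthComponent a x‖)
          / (sliceRadius a b * ‖a‖ ^ 2)) • a := by
      conv_lhs => rw [← orthComponent_add_smul a x]
      simp only [r₀, halfspaceBallMaximizer, smul_sub, smul_smul]
      match_scalars
      · field_simp
      · field_simp; ring
    have hm : 0 ≤ (⟪x, a⟫ * sliceRadius a b + ⟪a, b⟫ * ‖orthComponent a x‖)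
        / (sliceRadius a b * ‖a‖ ^ 2) := by
      have := mul_le_mul_of_nonneg_right (neg_abs_le ⟪x, a⟫) hD.le
      exact div_nonneg (by linarith) (by positivity)
    rw [hx]
    exact inner_smul_add_smul_le (by positivity) hm hr₀ har₀

theorem isGreatest_inner_halfspace_ball (hangle : |⟪x, a⟫| * ‖b‖ < ⟪a, b⟫ * ‖x‖) :
    IsGreatest {v : ℝ | ∃ r : F, ⟪a, r + b⟫ ≤ 0 ∧ ‖r‖ ^ 2 ≤ ‖b‖ ^ 2 ∧ v = ⟪x, r⟫}
      (‖orthComponent a x‖ * sliceRadius a b - ⟪a, b⟫ * ⟪x, a⟫ / ‖a‖ ^ 2) := by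
  have hkkt := abs_inner_mul_sliceRadius_lt hangle
  obtain ⟨hc, hw⟩ := pos_of_abs_inner_mul_sliceRadius_lt hkkt
  have ha : a ≠ 0 := by rintro rfl; simp at hc
  replace hw := norm_pos_iff.1 hw
  refine ⟨⟨halfspaceBallMaximizer a b x, ?_, ?_, (inner_halfspaceBallMaximizer ha hw).symm⟩, ?_⟩
  · rw [inner_add_right, inner_halfspaceBallMaximizer_left ha, neg_add_cancel]
  · rw [norm_halfspaceBallMaximizer ha hw]
  · rintro _ ⟨r, har, hr, rfl⟩
    rw [← inner_halfspaceBallMaximizer ha hw]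
    refine inner_le_inner_halfspaceBallMaximizer hkkt ?_ ?_
    · rw [inner_add_right] at har
      linarith
    · exact (pow_le_pow_iff_left₀ (norm_nonneg _) (norm_nonneg _) two_ne_zero).1 hr

end

theorem stmt_11_general {n : ℕ} (a b x : EuclideanSpace ℝ (Fin n))
    (hb : b ≠ 0) (hx : x ≠ 0)
    (hangle : ⟪b, a⟫ / ‖b‖ > |(⟪x, a⟫)| / ‖x‖) :
    IsGreatest {v : ℝ | ∃ r : EuclideanSpace ℝ (Fin n),
        ⟪a, r + b⟫ ≤ 0 ∧ ‖r‖ ^ 2 ≤ ‖b‖ ^ 2 ∧ v = ⟪x, r⟫}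
      (‖x - (⟪x, a⟫ / ‖a‖ ^ 2) • a‖ * Real.sqrt (‖b‖ ^ 2 - ⟪b, a⟫ ^ 2 / ‖a‖ ^ 2)
        - ⟪a, b⟫ * ⟪x, a⟫ / ‖a‖ ^ 2) := by
  rw [real_inner_comm a b] at hangle ⊢
  exact isGreatest_inner_halfspace_ball
    ((div_lt_div_iff₀ (norm_pos_iff.2 hx) (norm_pos_iff.2 hb)).1 hangle)

/-- Maximization counterpart: for `a ≠ 0`, `b ≠ 0`, `⟪a, b⟫ ≥ 0`, `x ≠ 0`, and
`⟪b,a⟫/‖b‖ > |⟪x,a⟫|/‖x‖`, the maximum of `⟪x, r⟫` over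
`{r : ⟪a, r + b⟫ ≤ 0, ‖r‖² ≤ ‖b‖²}` equals
`‖x^⊥‖ √(‖b‖² - ⟪b,a⟫²/‖a‖²) - ⟪a,b⟫⟪x,a⟫/‖a‖²` with `x^⊥ = x - (⟪x,a⟫/‖a‖²) • a`. -/
theorem stmt_11 {n : ℕ} (a b x : EuclideanSpace ℝ (Fin n))
    (ha : a ≠ 0) (hb : b ≠ 0) (hab : ⟪a, b⟫ ≥ 0) (hx : x ≠ 0)
    (hangle : ⟪b, a⟫ / ‖b‖ > |(⟪x, a⟫)| / ‖x‖) :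
    IsGreatest {v : ℝ | ∃ r : EuclideanSpace ℝ (Fin n),
        ⟪a, r + b⟫ ≤ 0 ∧ ‖r‖ ^ 2 ≤ ‖b‖ ^ 2 ∧ v = ⟪x, r⟫}
      (‖x - (⟪x, a⟫ / ‖a‖ ^ 2) • a‖ * Real.sqrt (‖b‖ ^ 2 - ⟪b, a⟫ ^ 2 / ‖a‖ ^ 2)
        - ⟪a, b⟫ * ⟪x, a⟫ / ‖a‖ ^ 2) :=
  stmt_11_general a b x hb hx hangle
end

section
/- Under the same setting, if ⟨x_j, a⟩ > 0 and ⟨b,a⟩/(‖b‖₂‖a‖₂) ≤ ⟨x_j,a⟩/(‖x_j‖₂‖a‖₂), then max_{θ ∈ Ω} ⟨-x_j, θ⟩ = -⟨x_j, θ₁*⟩ + (1/2)[‖x_j‖₂‖b‖₂ - ⟨x_j, b⟩]. -/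
/-!
The second constraint of `Ω` says that `θ` lies in the closed ball with diameter `[θ₁*, y/λ₂]`,
of centre `θ₁* + b/2` and radius `‖b‖/2`. On that ball `⟪-x_j, θ⟫` is maximised at
`θ₁* + b/2 - (‖b‖ / (2‖x_j‖)) x_j`, and the angle condition is exactly what puts this point in the
half-space of the first constraint, so it is also the maximiser over `Ω`.
-/

open RealInnerProductSpace

section
variable {E : Type*} [NormedAddCommGroup E] [InnerProductSpace ℝ E]

theorem inner_sub_add_sub_eq_sq_sub_sq (p d θ : E) :
    ⟪θ - (p + d), p - θ⟫ = (‖d‖ / 2) ^ 2 - ‖θ - (p + (1 / 2 : ℝ) • d)‖ ^ 2 := by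
  obtain ⟨w, rfl⟩ : ∃ w, θ = p + (1 / 2 : ℝ) • d + w := ⟨θ - (p + (1 / 2 : ℝ) • d), by abel⟩
  have h1 : p + (1 / 2 : ℝ) • d + w - (p + d) = w - (1 / 2 : ℝ) • d := by module
  have h2 : p - (p + (1 / 2 : ℝ) • d + w) = -(w + (1 / 2 : ℝ) • d) := by module
  rw [h1, h2, add_sub_cancel_left]
  simp only [inner_neg_right, inner_sub_left, inner_add_right, inner_smul_left, inner_smul_right,
    real_inner_comm d w, real_inner_self_eq_norm_sq, RCLike.conj_to_real]
  ring

theorem inner_sub_add_sub_nonneg_iff {p d θ : E} :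
    0 ≤ ⟪θ - (p + d), p - θ⟫ ↔ ‖θ - (p + (1 / 2 : ℝ) • d)‖ ≤ ‖d‖ / 2 := by
  rw [inner_sub_add_sub_eq_sq_sub_sq, sub_nonneg]
  exact sq_le_sq₀ (norm_nonneg _) (by positivity)

theorem inner_le_of_norm_sub_le {u c θ : E} {r : ℝ} (h : ‖θ - c‖ ≤ r) :
    ⟪u, θ⟫ ≤ ⟪u, c⟫ + r * ‖u‖ := by
  calc ⟪u, θ⟫ = ⟪u, c⟫ + ⟪u, θ - c⟫ := by rw [inner_sub_right]; ring
    _ ≤ ⟪u, c⟫ + ‖u‖ * ‖θ - c‖ := by gcongr; exact real_inner_le_norm _ _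
    _ ≤ ⟪u, c⟫ + r * ‖u‖ := by rw [mul_comm]; gcongr

theorem norm_div_norm_smul_le (u : E) {r : ℝ} (hr : 0 ≤ r) : ‖(r / ‖u‖) • u‖ ≤ r := by
  rcases eq_or_ne u 0 with rfl | hu
  · simpa using hr
  · rw [norm_smul, Real.norm_eq_abs, abs_div, abs_norm, abs_of_nonneg hr,
      div_mul_cancel₀ _ (norm_ne_zero_iff.mpr hu)]

theorem inner_add_div_norm_smul (u c : E) (r : ℝ) :
    ⟪u, c + (r / ‖u‖) • u⟫ = ⟪u, c⟫ + r * ‖u‖ := by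
  rcases eq_or_ne u 0 with rfl | hu
  · simp
  · rw [inner_add_right, real_inner_smul_right, real_inner_self_eq_norm_sq]
    field_simp

theorem inner_le_norm_mul_div_norm_of_angle_le {a b x : E}
    (h : ⟪b, a⟫ / (‖b‖ * ‖a‖) ≤ ⟪x, a⟫ / (‖x‖ * ‖a‖)) : ⟪b, a⟫ ≤ ‖b‖ * (⟪x, a⟫ / ‖x‖) := by
  rcases eq_or_ne a 0 with rfl | ha
  · simp
  rcases eq_or_ne b 0 with rfl | hb
  · simp
  have hba : 0 < ‖b‖ * ‖a‖ := by positivity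
  have ha' : ‖a‖ ≠ 0 := norm_ne_zero_iff.mpr ha
  calc ⟪b, a⟫ = ⟪b, a⟫ / (‖b‖ * ‖a‖) * (‖b‖ * ‖a‖) := by field_simp
    _ ≤ ⟪x, a⟫ / (‖x‖ * ‖a‖) * (‖b‖ * ‖a‖) := mul_le_mul_of_nonneg_right h hba.le
    _ = ‖b‖ * (⟪x, a⟫ / ‖x‖) := by rw [mul_comm ‖x‖, ← div_div]; field_simp

theorem isGreatest_neg_inner_halfspace_inter_ball {p a d x : E}
    (h : ⟪d, a⟫ ≤ ‖d‖ * (⟪x, a⟫ / ‖x‖)) :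
    IsGreatest {v : ℝ | ∃ θ : E, (⟪-a, θ - p⟫ ≥ 0 ∧ ⟪θ - (p + d), p - θ⟫ ≥ 0) ∧ v = ⟪-x, θ⟫}
      (-⟪x, p⟫ + (1 / 2) * (‖x‖ * ‖d‖ - ⟪x, d⟫)) := by
  set c := p + (1 / 2 : ℝ) • d
  set r := ‖d‖ / 2
  have hr : 0 ≤ r := by positivity
  have hvalue : -⟪x, p⟫ + (1 / 2) * (‖x‖ * ‖d‖ - ⟪x, d⟫) = ⟪-x, c⟫ + r * ‖-x‖ := by
    simp only [c, r, norm_neg, inner_neg_left, inner_add_right, real_inner_smul_right]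
    ring
  rw [hvalue]
  refine ⟨⟨c + (r / ‖-x‖) • -x, ⟨?_, ?_⟩, (inner_add_div_norm_smul _ _ _).symm⟩, ?_⟩
  · have hd : c + (r / ‖-x‖) • -x - p = (1 / 2 : ℝ) • d - (r / ‖x‖) • x := by
      simp only [c, norm_neg]; module
    rw [hd, inner_neg_left, inner_sub_right, real_inner_smul_right, real_inner_smul_right,
      real_inner_comm d a, real_inner_comm x a]
    have : r / ‖x‖ * ⟪x, a⟫ = 1 / 2 * (‖d‖ * (⟪x, a⟫ / ‖x‖)) := by simp only [r]; ring
    linarith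
  · rw [ge_iff_le, inner_sub_add_sub_nonneg_iff, add_sub_cancel_left]
    exact norm_div_norm_smul_le _ hr
  · rintro v ⟨θ, ⟨-, hball⟩, rfl⟩
    exact inner_le_of_norm_sub_le (inner_sub_add_sub_nonneg_iff.mp hball)

end

theorem stmt_13_general {n p : ℕ} (X : Fin p → EuclideanSpace ℝ (Fin n))
    (y : EuclideanSpace ℝ (Fin n))
    (lam1 lam2 : ℝ)
    (θ1 : EuclideanSpace ℝ (Fin n))
    (a b : EuclideanSpace ℝ (Fin n))
    (ha : a = (1 / lam1) • y - θ1) (hb : b = (1 / lam2) • y - θ1)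
    (j : Fin p)
    (hangle : ⟪b, a⟫ / (‖b‖ * ‖a‖) ≤ ⟪X j, a⟫ / (‖X j‖ * ‖a‖)) :
    IsGreatest {v : ℝ | ∃ θ : EuclideanSpace ℝ (Fin n),
        (⟪θ1 - (1 / lam1) • y, θ - θ1⟫ ≥ 0 ∧ ⟪θ - (1 / lam2) • y, θ1 - θ⟫ ≥ 0) ∧
        v = ⟪-X j, θ⟫}
      (-⟪X j, θ1⟫ + (1 / 2) * (‖X j‖ * ‖b‖ - ⟪X j, b⟫)) := by
  have hΩa : θ1 - (1 / lam1) • y = -a := by rw [ha, neg_sub]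
  have hΩb : (1 / lam2) • y = θ1 + b := by rw [hb, add_sub_cancel]
  rw [hΩa, hΩb]
  exact isGreatest_neg_inner_halfspace_inter_ball (inner_le_norm_mul_div_norm_of_angle_le hangle)

/-- Theorem 3, Case 2: if `⟪x_j, a⟫ > 0` and `⟪b,a⟫/(‖b‖‖a‖) ≤ ⟪x_j,a⟫/(‖x_j‖‖a‖)`, then
`max_{θ ∈ Ω} ⟪-x_j, θ⟫ = -⟪x_j, θ₁*⟫ + (1/2)(‖x_j‖‖b‖ - ⟪x_j, b⟫)`. -/
theorem stmt_13 {n p : ℕ} (X : Fin p → EuclideanSpace ℝ (Fin n))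
    (y : EuclideanSpace ℝ (Fin n)) (hy : y ≠ 0) (lmax : ℝ)
    (hlmax : IsGreatest (Set.range fun j => |(⟪X j, y⟫)|) lmax)
    (lam1 lam2 : ℝ) (hlam2 : 0 < lam2) (hlam12 : lam2 < lam1) (hlam1le : lam1 ≤ lmax)
    (θ1 : EuclideanSpace ℝ (Fin n))
    (hθ1mem : ∀ j, |(⟪X j, θ1⟫)| ≤ 1)
    (hθ1opt : ∀ θ : EuclideanSpace ℝ (Fin n), (∀ j, |(⟪X j, θ⟫)| ≤ 1) →
      ‖θ1 - (1 / lam1) • y‖ ≤ ‖θ - (1 / lam1) • y‖)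
    (a b : EuclideanSpace ℝ (Fin n))
    (ha : a = (1 / lam1) • y - θ1) (hb : b = (1 / lam2) • y - θ1)
    (j : Fin p) (hj : X j ≠ 0)
    (hpos : ⟪X j, a⟫ > 0)
    (hangle : ⟪b, a⟫ / (‖b‖ * ‖a‖) ≤ ⟪X j, a⟫ / (‖X j‖ * ‖a‖)) :
    IsGreatest {v : ℝ | ∃ θ : EuclideanSpace ℝ (Fin n),
        (⟪θ1 - (1 / lam1) • y, θ - θ1⟫ ≥ 0 ∧ ⟪θ - (1 / lam2) • y, θ1 - θ⟫ ≥ 0) ∧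
        v = ⟪-X j, θ⟫}
      (-⟪X j, θ1⟫ + (1 / 2) * (‖X j‖ * ‖b‖ - ⟪X j, b⟫)) :=
  stmt_13_general X y lam1 lam2 θ1 a b ha hb j hangle
end

section
/- Under the same setting, if a = 0 then max_{θ ∈ Ω} ⟨x_j, θ⟩ = ⟨x_j, θ₁*⟩ + (1/2)[‖x_j‖₂‖b‖₂ + ⟨x_j, b⟩] and max_{θ ∈ Ω} ⟨-x_j, θ⟩ = -⟨x_j, θ₁*⟩ + (1/2)[‖x_j‖₂‖b‖₂ - ⟨x_j, b⟩]. -/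
open RealInnerProductSpace

lemma ball_max_aux {n : ℕ} (x u v : EuclideanSpace ℝ (Fin n)) (hx : x ≠ 0) :
    IsGreatest {w : ℝ | ∃ θ : EuclideanSpace ℝ (Fin n),
        ⟪θ - u, v - θ⟫ ≥ 0 ∧ w = ⟪x, θ⟫}
      (⟪x, (1/2 : ℝ) • (u + v)⟫ + ‖x‖ * (‖u - v‖ / 2)) := by
  obtain ⟨c, hc⟩ : ∃ c : EuclideanSpace ℝ (Fin n), c = (1/2 : ℝ) • (u + v) := ⟨_, rfl⟩
  obtain ⟨d, hd⟩ : ∃ d : EuclideanSpace ℝ (Fin n), d = (1/2 : ℝ) • (v - u) := ⟨_, rfl⟩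
  rw [← hc]
  have hdn : ‖d‖ = ‖u - v‖ / 2 := by
    rw [hd, norm_smul, Real.norm_eq_abs, abs_of_nonneg (by norm_num : (0:ℝ) ≤ 1/2),
      norm_sub_rev]
    ring
  have key : ∀ θ : EuclideanSpace ℝ (Fin n),
      ⟪θ - u, v - θ⟫ = ‖d‖ ^ 2 - ‖θ - c‖ ^ 2 := by
    intro θ
    obtain ⟨e, he⟩ : ∃ e : EuclideanSpace ℝ (Fin n), e = θ - c := ⟨_, rfl⟩
    have h1 : θ - u = e + d := by rw [he, hc, hd]; module
    have h2 : v - θ = d - e := by rw [he, hc, hd]; module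
    have e1 : ⟪d, d⟫ = ‖d‖ ^ 2 := real_inner_self_eq_norm_sq d
    have e2 : ⟪e, e⟫ = ‖e‖ ^ 2 := real_inner_self_eq_norm_sq e
    have hcm : ⟪d, e⟫ = ⟪e, d⟫ := real_inner_comm _ _
    rw [h1, h2, ← he]
    simp only [inner_add_left, inner_sub_right]
    linarith
  have hxn : (0:ℝ) < ‖x‖ := norm_pos_iff.mpr hx
  rw [← hdn]
  constructor
  · refine ⟨c + (‖d‖ / ‖x‖) • x, ?_, ?_⟩
    · rw [key]
      have h5 : (c + (‖d‖ / ‖x‖) • x) - c = (‖d‖ / ‖x‖) • x := by abel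
      rw [h5, norm_smul, Real.norm_eq_abs,
        abs_of_nonneg (by positivity : (0:ℝ) ≤ ‖d‖ / ‖x‖)]
      have h6 : ‖d‖ / ‖x‖ * ‖x‖ = ‖d‖ := by field_simp
      rw [h6]
      simp
    · rw [inner_add_right, real_inner_smul_right, real_inner_self_eq_norm_sq]
      field_simp
  · rintro w ⟨θ, hθ, rfl⟩
    rw [key] at hθ
    have h1 : ‖θ - c‖ ≤ ‖d‖ := by nlinarith [norm_nonneg (θ - c), norm_nonneg d]
    have h2 : ⟪x, θ⟫ = ⟪x, c⟫ + ⟪x, θ - c⟫ := by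
      rw [← inner_add_right]; congr 1; abel
    have h3 : ⟪x, θ - c⟫ ≤ ‖x‖ * ‖θ - c‖ := real_inner_le_norm x (θ - c)
    have h4 : ‖x‖ * ‖θ - c‖ ≤ ‖x‖ * ‖d‖ :=
      mul_le_mul_of_nonneg_left h1 (norm_nonneg x)
    linarith

/-- Theorem 3, Case 4: if `a = 0` then
`max_{θ ∈ Ω} ⟪x_j, θ⟫ = ⟪x_j, θ₁*⟫ + (1/2)(‖x_j‖‖b‖ + ⟪x_j, b⟫)` and
`max_{θ ∈ Ω} ⟪-x_j, θ⟫ = -⟪x_j, θ₁*⟫ + (1/2)(‖x_j‖‖b‖ - ⟪x_j, b⟫)`. -/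
theorem stmt_14 {n p : ℕ} (X : Fin p → EuclideanSpace ℝ (Fin n))
    (y : EuclideanSpace ℝ (Fin n)) (hy : y ≠ 0) (lmax : ℝ)
    (hlmax : IsGreatest (Set.range fun j => |(⟪X j, y⟫)|) lmax)
    (lam1 lam2 : ℝ) (hlam2 : 0 < lam2) (hlam12 : lam2 < lam1) (hlam1le : lam1 ≤ lmax)
    (θ1 : EuclideanSpace ℝ (Fin n))
    (hθ1mem : ∀ j, |(⟪X j, θ1⟫)| ≤ 1)
    (hθ1opt : ∀ θ : EuclideanSpace ℝ (Fin n), (∀ j, |(⟪X j, θ⟫)| ≤ 1) →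
      ‖θ1 - (1 / lam1) • y‖ ≤ ‖θ - (1 / lam1) • y‖)
    (a b : EuclideanSpace ℝ (Fin n))
    (ha : a = (1 / lam1) • y - θ1) (hb : b = (1 / lam2) • y - θ1)
    (j : Fin p) (hj : X j ≠ 0)
    (ha0 : a = 0) :
    IsGreatest {v : ℝ | ∃ θ : EuclideanSpace ℝ (Fin n),
        (⟪θ1 - (1 / lam1) • y, θ - θ1⟫ ≥ 0 ∧ ⟪θ - (1 / lam2) • y, θ1 - θ⟫ ≥ 0) ∧
        v = ⟪X j, θ⟫}
      (⟪X j, θ1⟫ + (1 / 2) * (‖X j‖ * ‖b‖ + ⟪X j, b⟫)) ∧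
    IsGreatest {v : ℝ | ∃ θ : EuclideanSpace ℝ (Fin n),
        (⟪θ1 - (1 / lam1) • y, θ - θ1⟫ ≥ 0 ∧ ⟪θ - (1 / lam2) • y, θ1 - θ⟫ ≥ 0) ∧
        v = ⟪-X j, θ⟫}
      (-⟪X j, θ1⟫ + (1 / 2) * (‖X j‖ * ‖b‖ - ⟪X j, b⟫)) := by
  have h0 : (1 / lam1) • y - θ1 = 0 := by rw [← ha, ha0]
  have hzero : θ1 - (1 / lam1) • y = 0 := by
    rw [← neg_sub ((1 / lam1) • y) θ1, h0, neg_zero]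
  have hsetP : ∀ θ : EuclideanSpace ℝ (Fin n), ⟪θ1 - (1 / lam1) • y, θ - θ1⟫ ≥ 0 := by
    intro θ; rw [hzero, inner_zero_left]
  have hub : (1 / lam2) • y - θ1 = b := hb.symm
  have hcval : ∀ x : EuclideanSpace ℝ (Fin n),
      ⟪x, (1/2 : ℝ) • ((1 / lam2) • y + θ1)⟫ = ⟪x, θ1⟫ + (1/2) * ⟪x, b⟫ := by
    intro x
    have h : (1/2 : ℝ) • ((1 / lam2) • y + θ1)
        = θ1 + (1/2 : ℝ) • ((1 / lam2) • y - θ1) := by module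
    rw [h, inner_add_right, real_inner_smul_right, hub]
  have hseteq : ∀ x : EuclideanSpace ℝ (Fin n),
      {v : ℝ | ∃ θ : EuclideanSpace ℝ (Fin n),
        (⟪θ1 - (1 / lam1) • y, θ - θ1⟫ ≥ 0 ∧ ⟪θ - (1 / lam2) • y, θ1 - θ⟫ ≥ 0) ∧
        v = ⟪x, θ⟫} =
      {w : ℝ | ∃ θ : EuclideanSpace ℝ (Fin n),
        ⟪θ - (1 / lam2) • y, θ1 - θ⟫ ≥ 0 ∧ w = ⟪x, θ⟫} := by
    intro x
    ext w
    simp only [Set.mem_setOf_eq]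
    constructor
    · rintro ⟨θ, ⟨_, h2⟩, rfl⟩; exact ⟨θ, h2, rfl⟩
    · rintro ⟨θ, h2, rfl⟩; exact ⟨θ, ⟨hsetP θ, h2⟩, rfl⟩
  have hubn : ‖(1 / lam2) • y - θ1‖ = ‖b‖ := by rw [hub]
  constructor
  · rw [hseteq (X j)]
    have h := ball_max_aux (X j) ((1 / lam2) • y) θ1 hj
    convert h using 1
    rw [hcval, hubn]; ring
  · rw [hseteq (-X j)]
    have h := ball_max_aux (-X j) ((1 / lam2) • y) θ1 (neg_ne_zero.mpr hj)
    convert h using 1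
    rw [hcval, norm_neg, hubn, inner_neg_left, inner_neg_left]; ring
end

section
/- Monotonicity of the auxiliary functions: let y, a ∈ ℝ^n with y ≠ 0, a not parallel to y, and θ₁* ∈ ℝ^n with a = y/λ₁ - θ₁* for a fixed λ₁ > 0. Then f(λ) = ⟨y/λ - θ₁*, a⟩ / ‖y/λ - θ₁*‖₂ is strictly increasing in λ on (0, λ₁], and g(λ) = ⟨y/λ - θ₁*, y⟩ / ‖y/λ - θ₁*‖₂ is strictly decreasing in λ on (0, λ₁]. -/
open RealInnerProductSpace

private lemma npos' (A B C : ℝ) (hA : 0 < A) (hC : 0 < C) (hΔ : B^2 < A*C) (γ : ℝ) :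
    0 < A + 2*γ*B + γ^2*C := by
  nlinarith [sq_nonneg (B + γ*C)]

private lemma key_f (A B C : ℝ) (hA : 0 < A) (hC : 0 < C) (hΔ : B^2 < A*C)
    (γ₁ γ₂ : ℝ) (h1 : 0 ≤ γ₁) (h12 : γ₁ < γ₂) :
    (A + γ₂*B) / Real.sqrt (A + 2*γ₂*B + γ₂^2*C)
      < (A + γ₁*B) / Real.sqrt (A + 2*γ₁*B + γ₁^2*C) := by
  have hN1 : 0 < A + 2*γ₁*B + γ₁^2*C := npos' A B C hA hC hΔ γ₁
  have hN2 : 0 < A + 2*γ₂*B + γ₂^2*C := npos' A B C hA hC hΔ γ₂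
  have hs1 : 0 < Real.sqrt (A + 2*γ₁*B + γ₁^2*C) := Real.sqrt_pos.2 hN1
  have hs2 : 0 < Real.sqrt (A + 2*γ₂*B + γ₂^2*C) := Real.sqrt_pos.2 hN2
  have hsq1 : (Real.sqrt (A + 2*γ₁*B + γ₁^2*C))^2 = A + 2*γ₁*B + γ₁^2*C :=
    Real.sq_sqrt hN1.le
  have hsq2 : (Real.sqrt (A + 2*γ₂*B + γ₂^2*C))^2 = A + 2*γ₂*B + γ₂^2*C :=
    Real.sq_sqrt hN2.le
  have h2 : 0 < γ₂ := lt_of_le_of_lt h1 h12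
  have hid : (A + γ₁*B)^2 * (A + 2*γ₂*B + γ₂^2*C) - (A + γ₂*B)^2 * (A + 2*γ₁*B + γ₁^2*C)
      = (A*C - B^2) * (γ₂ - γ₁) * (γ₁*(A + γ₂*B) + γ₂*(A + γ₁*B)) := by ring
  rw [div_lt_div_iff₀ hs2 hs1]
  rcases le_or_gt 0 (A + γ₂*B) with hpos | hneg
  · have hpos1 : 0 < A + γ₁*B := by
      rcases le_or_gt 0 B with hB | hB
      · nlinarith
      · nlinarith
    have hsum : 0 < γ₁*(A + γ₂*B) + γ₂*(A + γ₁*B) :=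
      add_pos_of_nonneg_of_pos (mul_nonneg h1 hpos) (mul_pos h2 hpos1)
    have hkey : ((A + γ₂*B) * Real.sqrt (A + 2*γ₁*B + γ₁^2*C))^2
        < ((A + γ₁*B) * Real.sqrt (A + 2*γ₂*B + γ₂^2*C))^2 := by
      rw [mul_pow, mul_pow, hsq1, hsq2]
      nlinarith [mul_pos (mul_pos (sub_pos.2 hΔ) (sub_pos.2 h12)) hsum]
    exact lt_of_pow_lt_pow_left₀ 2 (mul_nonneg hpos1.le hs2.le) hkey
  · rcases le_or_gt 0 (A + γ₁*B) with hpos1 | hneg1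
    · calc (A + γ₂*B) * Real.sqrt (A + 2*γ₁*B + γ₁^2*C) < 0 :=
            mul_neg_of_neg_of_pos hneg hs1
        _ ≤ (A + γ₁*B) * Real.sqrt (A + 2*γ₂*B + γ₂^2*C) := mul_nonneg hpos1 hs2.le
    · have hsum : γ₁*(A + γ₂*B) + γ₂*(A + γ₁*B) < 0 :=
        add_neg_of_nonpos_of_neg (mul_nonpos_of_nonneg_of_nonpos h1 hneg.le)
          (mul_neg_of_pos_of_neg h2 hneg1)
      have hkey : (-((A + γ₁*B) * Real.sqrt (A + 2*γ₂*B + γ₂^2*C)))^2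
          < (-((A + γ₂*B) * Real.sqrt (A + 2*γ₁*B + γ₁^2*C)))^2 := by
        rw [neg_sq, neg_sq, mul_pow, mul_pow, hsq1, hsq2]
        nlinarith [mul_pos (mul_pos (sub_pos.2 hΔ) (sub_pos.2 h12)) (neg_pos.2 hsum)]
      have := lt_of_pow_lt_pow_left₀ 2
        (neg_nonneg.2 (mul_neg_of_neg_of_pos hneg hs1).le) hkey
      linarith

private lemma key_g (A B C : ℝ) (hA : 0 < A) (hC : 0 < C) (hΔ : B^2 < A*C)
    (γ₁ γ₂ : ℝ) (h1 : 0 ≤ γ₁) (h12 : γ₁ < γ₂) :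
    (B + γ₁*C) / Real.sqrt (A + 2*γ₁*B + γ₁^2*C)
      < (B + γ₂*C) / Real.sqrt (A + 2*γ₂*B + γ₂^2*C) := by
  have hN1 : 0 < A + 2*γ₁*B + γ₁^2*C := npos' A B C hA hC hΔ γ₁
  have hN2 : 0 < A + 2*γ₂*B + γ₂^2*C := npos' A B C hA hC hΔ γ₂
  have hs1 : 0 < Real.sqrt (A + 2*γ₁*B + γ₁^2*C) := Real.sqrt_pos.2 hN1
  have hs2 : 0 < Real.sqrt (A + 2*γ₂*B + γ₂^2*C) := Real.sqrt_pos.2 hN2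
  have hsq1 : (Real.sqrt (A + 2*γ₁*B + γ₁^2*C))^2 = A + 2*γ₁*B + γ₁^2*C :=
    Real.sq_sqrt hN1.le
  have hsq2 : (Real.sqrt (A + 2*γ₂*B + γ₂^2*C))^2 = A + 2*γ₂*B + γ₂^2*C :=
    Real.sq_sqrt hN2.le
  have hid : (B + γ₂*C)^2 * (A + 2*γ₁*B + γ₁^2*C) - (B + γ₁*C)^2 * (A + 2*γ₂*B + γ₂^2*C)
      = (A*C - B^2) * (γ₂ - γ₁) * ((B + γ₁*C) + (B + γ₂*C)) := by ring
  rw [div_lt_div_iff₀ hs1 hs2]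
  rcases le_or_gt 0 (B + γ₁*C) with hpos | hneg
  · have hpos2 : 0 < B + γ₂*C := by nlinarith
    have hsum : 0 < (B + γ₁*C) + (B + γ₂*C) := add_pos_of_nonneg_of_pos hpos hpos2
    have hkey : ((B + γ₁*C) * Real.sqrt (A + 2*γ₂*B + γ₂^2*C))^2
        < ((B + γ₂*C) * Real.sqrt (A + 2*γ₁*B + γ₁^2*C))^2 := by
      rw [mul_pow, mul_pow, hsq1, hsq2]
      nlinarith [mul_pos (mul_pos (sub_pos.2 hΔ) (sub_pos.2 h12)) hsum]
    exact lt_of_pow_lt_pow_left₀ 2 (mul_nonneg hpos2.le hs1.le) hkey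
  · rcases le_or_gt 0 (B + γ₂*C) with hpos2 | hneg2
    · calc (B + γ₁*C) * Real.sqrt (A + 2*γ₂*B + γ₂^2*C) < 0 :=
            mul_neg_of_neg_of_pos hneg hs2
        _ ≤ (B + γ₂*C) * Real.sqrt (A + 2*γ₁*B + γ₁^2*C) := mul_nonneg hpos2 hs1.le
    · have hsum : (B + γ₁*C) + (B + γ₂*C) < 0 := add_neg hneg hneg2
      have hkey : (-((B + γ₂*C) * Real.sqrt (A + 2*γ₁*B + γ₁^2*C)))^2
          < (-((B + γ₁*C) * Real.sqrt (A + 2*γ₂*B + γ₂^2*C)))^2 := by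
        rw [neg_sq, neg_sq, mul_pow, mul_pow, hsq1, hsq2]
        nlinarith [mul_pos (mul_pos (sub_pos.2 hΔ) (sub_pos.2 h12)) (neg_pos.2 hsum)]
      have := lt_of_pow_lt_pow_left₀ 2
        (neg_nonneg.2 (mul_neg_of_neg_of_pos hneg hs2).le) hkey
      linarith

/-- Monotonicity of the auxiliary functions: with `y ≠ 0`, `a` not parallel to `y`, and
`a = y/λ₁ - θ₁*` for fixed `λ₁ > 0`, the function
`f(λ) = ⟪y/λ - θ₁*, a⟫ / ‖y/λ - θ₁*‖` is strictly increasing on `(0, λ₁]`, and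
`g(λ) = ⟪y/λ - θ₁*, y⟫ / ‖y/λ - θ₁*‖` is strictly decreasing on `(0, λ₁]`. -/
theorem stmt_18 {n : ℕ} (y a θ1 : EuclideanSpace ℝ (Fin n))
    (hy : y ≠ 0) (hpar : ∀ c : ℝ, a ≠ c • y)
    (lam1 : ℝ) (hlam1 : 0 < lam1) (ha : a = (1 / lam1) • y - θ1) :
    StrictMonoOn (fun lam : ℝ => ⟪(1 / lam) • y - θ1, a⟫ / ‖(1 / lam) • y - θ1‖)
      (Set.Ioc 0 lam1) ∧
    StrictAntiOn (fun lam : ℝ => ⟪(1 / lam) • y - θ1, y⟫ / ‖(1 / lam) • y - θ1‖)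
      (Set.Ioc 0 lam1) := by
  have ha0 : a ≠ 0 := by
    intro h
    exact hpar 0 (by simp [h])
  set A : ℝ := ‖a‖^2 with hAdef
  set B : ℝ := ⟪a, y⟫ with hBdef
  set C : ℝ := ‖y‖^2 with hCdef
  have hA : 0 < A := by rw [hAdef]; exact pow_pos (norm_pos_iff.2 ha0) 2
  have hC : 0 < C := by rw [hCdef]; exact pow_pos (norm_pos_iff.2 hy) 2
  have hy' : ‖y‖ ≠ 0 := norm_ne_zero_iff.2 hy
  -- strict Cauchy-Schwarz
  have hCS1 : B < ‖a‖ * ‖y‖ := by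
    rw [hBdef]
    refine inner_lt_norm_mul_iff_real.2 fun h => hpar (‖a‖ / ‖y‖) ?_
    calc a = ‖y‖⁻¹ • (‖y‖ • a) := by rw [smul_smul, inv_mul_cancel₀ hy', one_smul]
      _ = ‖y‖⁻¹ • (‖a‖ • y) := by rw [h]
      _ = (‖a‖ / ‖y‖) • y := by rw [smul_smul, div_eq_inv_mul]
  have hCS2 : -B < ‖a‖ * ‖y‖ := by
    have h2 : ⟪a, -y⟫ < ‖a‖ * ‖-y‖ := by
      refine inner_lt_norm_mul_iff_real.2 fun h => hpar (-(‖a‖ / ‖y‖)) ?_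
      rw [norm_neg, smul_neg] at h
      calc a = ‖-y‖⁻¹ • (‖-y‖ • a) := by
            rw [smul_smul, inv_mul_cancel₀ (by rwa [norm_neg]), one_smul]
        _ = ‖-y‖⁻¹ • (-(‖a‖ • y)) := by rw [norm_neg, h]
        _ = (-(‖a‖ / ‖y‖)) • y := by
            rw [norm_neg, smul_neg, smul_smul, div_eq_inv_mul, neg_smul]
    rw [inner_neg_right, norm_neg] at h2
    linarith
  have hΔ : B^2 < A*C := by
    have habs : |B| < ‖a‖ * ‖y‖ := abs_lt.2 ⟨by linarith, hCS1⟩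
    have h2 := mul_self_lt_mul_self (abs_nonneg B) habs
    calc B^2 = |B| * |B| := by rw [abs_mul_abs_self]; ring
      _ < (‖a‖ * ‖y‖) * (‖a‖ * ‖y‖) := h2
      _ = A*C := by rw [hAdef, hCdef]; ring
  -- rewrite the functions
  have hvec : ∀ lam : ℝ, lam ∈ Set.Ioc 0 lam1 →
      (1 / lam) • y - θ1 = a + (1/lam - 1/lam1) • y := by
    intro lam hlam
    rw [ha]
    module
  have hγ : ∀ lam : ℝ, lam ∈ Set.Ioc 0 lam1 → 0 ≤ 1/lam - 1/lam1 := by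
    intro lam hlam
    have := one_div_le_one_div_of_le hlam.1 hlam.2
    linarith
  have hinner_a : ∀ γ : ℝ, ⟪a + γ • y, a⟫ = A + γ*B := by
    intro γ
    rw [hAdef, hBdef, inner_add_left, real_inner_smul_left, real_inner_self_eq_norm_sq,
      real_inner_comm y a]
  have hinner_y : ∀ γ : ℝ, ⟪a + γ • y, y⟫ = B + γ*C := by
    intro γ
    rw [hBdef, hCdef, inner_add_left, real_inner_smul_left, real_inner_self_eq_norm_sq]
  have hnorm : ∀ γ : ℝ, ‖a + γ • y‖ = Real.sqrt (A + 2*γ*B + γ^2*C) := by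
    intro γ
    have h2 : ‖a + γ • y‖^2 = A + 2*γ*B + γ^2*C := by
      rw [← real_inner_self_eq_norm_sq, inner_add_right, real_inner_smul_right,
        hinner_a, hinner_y]
      ring
    rw [← h2, Real.sqrt_sq (norm_nonneg _)]
  constructor
  · intro p hp q hq hpq
    simp only
    rw [hvec p hp, hvec q hq, hinner_a, hinner_a, hnorm, hnorm]
    have hγq : 0 ≤ 1/q - 1/lam1 := hγ q hq
    have hγpq : 1/q - 1/lam1 < 1/p - 1/lam1 := by
      have := one_div_lt_one_div_of_lt hp.1 hpq
      linarith
    exact key_f A B C hA hC hΔ _ _ hγq hγpq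
  · intro p hp q hq hpq
    simp only
    rw [hvec p hp, hvec q hq, hinner_y, hinner_y, hnorm, hnorm]
    have hγq : 0 ≤ 1/q - 1/lam1 := hγ q hq
    have hγpq : 1/q - 1/lam1 < 1/p - 1/lam1 := by
      have := one_div_lt_one_div_of_lt hp.1 hpq
      linarith
    exact key_g A B C hA hC hΔ _ _ hγq hγpq
end

section
/- Monotonicity of the Sasvi upper bound u_j^+: let y ≠ 0, ‖Xᵀy‖_∞ ≥ λ₁, a = y/λ₁ - θ₁* with θ₁* the dual optimal at λ₁, and ⟨x_j, a⟩ ≥ 0. If a ≠ 0, then u_j^+(λ₂) = ⟨x_j, θ₁*⟩ + ((1/λ₂ - 1/λ₁)/2)[‖x_j^⊥‖₂‖y^⊥‖₂ + ⟨x_j^⊥, y^⊥⟩], and this is monotonically decreasing in λ₂ on (0, λ₁], since ‖x_j^⊥‖₂‖y^⊥‖₂ + ⟨x_j^⊥, y^⊥⟩ ≥ 0 by Cauchy–Schwarz. -/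
open RealInnerProductSpace

/-!
Write `d = θ - θ₁` and `t = 1/λ₂ - 1/λ₁`. The two conditions defining the Sasvi region say
`⟪a, d⟫ ≤ 0` and `‖d‖² ≤ ⟪a, d⟫ + t ⟪y, d⟫`. Since `θ₁` is the projection of `y/λ₁` onto the
dual feasible set, which is convex and contains `0`, we get `⟪a, θ₁⟫ ≥ 0`, hence `⟪y, a⟫ ≥ 0`.
Splitting every vector along `a`, the signs `⟪x, a⟫, ⟪y, a⟫ ≥ 0 ≥ ⟪a, d⟫` let us drop the
`a`-components: `d^⊥` lies in the ball `‖d^⊥‖² ≤ t ⟪y^⊥, d^⊥⟫` of centre `t y^⊥ / 2` and radius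
`t ‖y^⊥‖ / 2`, on which `⟪x^⊥, ·⟫` has maximum `(t/2)(‖x^⊥‖ ‖y^⊥‖ + ⟪x^⊥, y^⊥⟫)`, attained at a
point orthogonal to `a`. The coefficient is nonnegative by Cauchy–Schwarz and `1/λ₂` decreases.
-/

section

variable {E : Type*} [NormedAddCommGroup E] [InnerProductSpace ℝ E]

theorem real_inner_sub_le_zero_of_forall_norm_sub_le {K : Set E} (hK : Convex ℝ K) {u v : E}
    (hv : v ∈ K) (hmin : ∀ w ∈ K, ‖v - u‖ ≤ ‖w - u‖) {w : E} (hw : w ∈ K) :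
    ⟪u - v, w - v⟫ ≤ 0 := by
  have : Nonempty K := ⟨⟨v, hv⟩⟩
  refine (norm_eq_iInf_iff_real_inner_le_zero hK hv).1 (le_antisymm ?_ ?_) w hw
  · exact le_ciInf fun w => by simpa only [norm_sub_rev u] using hmin w w.2
  · exact ciInf_le (f := fun w : K => ‖u - w‖) ⟨0, by rintro _ ⟨w, rfl⟩; positivity⟩ ⟨v, hv⟩

theorem real_inner_residual_nonneg {K : Set E} (hK : Convex ℝ K) (h0 : (0 : E) ∈ K) {u v : E}
    (hv : v ∈ K) (hmin : ∀ w ∈ K, ‖v - u‖ ≤ ‖w - u‖) : 0 ≤ ⟪u - v, v⟫ := by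
  have := real_inner_sub_le_zero_of_forall_norm_sub_le hK hv hmin h0
  rw [zero_sub, inner_neg_right] at this
  linarith

theorem convex_setOf_forall_abs_real_inner_le {ι : Type*} (X : ι → E) (r : ℝ) :
    Convex ℝ {θ : E | ∀ j, |⟪X j, θ⟫| ≤ r} := by
  have : {θ : E | ∀ j, |⟪X j, θ⟫| ≤ r} = ⋂ j, innerₛₗ ℝ (X j) ⁻¹' Set.Icc (-r) r := by
    ext; simp [abs_le]
  exact this ▸ convex_iInter fun j => (convex_Icc (-r) r).linear_preimage _

theorem norm_mul_norm_add_real_inner_nonneg (w z : E) : 0 ≤ ‖w‖ * ‖z‖ + ⟪w, z⟫ := by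
  linarith [neg_le_of_abs_le (abs_real_inner_le_norm w z)]

theorem real_inner_le_of_norm_sq_le {t : ℝ} (ht : 0 ≤ t) {z e : E} (he : ‖e‖ ^ 2 ≤ t * ⟪z, e⟫)
    (w : E) : ⟪w, e⟫ ≤ t / 2 * (‖w‖ * ‖z‖ + ⟪w, z⟫) := by
  have hball : ‖e - (t / 2) • z‖ ≤ t / 2 * ‖z‖ := by
    refine (pow_le_pow_iff_left₀ (norm_nonneg _) (by positivity) two_ne_zero).1 ?_
    rw [norm_sub_sq_real, real_inner_smul_right, norm_smul, Real.norm_of_nonneg (by positivity),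
      real_inner_comm]
    nlinarith
  calc ⟪w, e⟫ = ⟪w, e - (t / 2) • z⟫ + t / 2 * ⟪w, z⟫ := by
        rw [inner_sub_right, real_inner_smul_right]; ring
    _ ≤ ‖w‖ * (t / 2 * ‖z‖) + t / 2 * ⟪w, z⟫ := by
        gcongr
        exact (real_inner_le_norm _ _).trans (by gcongr)
    _ = t / 2 * (‖w‖ * ‖z‖ + ⟪w, z⟫) := by ring

theorem exists_norm_sq_le_real_inner_eq {t : ℝ} (ht : 0 ≤ t) {a w z : E} (hw : ⟪w, a⟫ = 0)
    (hz : ⟪z, a⟫ = 0) :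
    ∃ e : E, ⟪e, a⟫ = 0 ∧ ‖e‖ ^ 2 ≤ t * ⟪z, e⟫ ∧ ⟪w, e⟫ = t / 2 * (‖w‖ * ‖z‖ + ⟪w, z⟫) := by
  rcases eq_or_ne w 0 with rfl | hw₀
  · refine ⟨(t / 2) • z, ?_, ?_, by simp⟩
    · rw [real_inner_smul_left, hz, mul_zero]
    · rw [norm_smul, real_inner_smul_right, real_inner_self_eq_norm_sq,
        Real.norm_of_nonneg (by positivity)]
      nlinarith [sq_nonneg ‖z‖]
  · have hw' : ‖w‖ ≠ 0 := norm_ne_zero_iff.2 hw₀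
    refine ⟨(t / 2) • (z + (‖z‖ / ‖w‖) • w), ?_, le_of_eq ?_, ?_⟩
    · simp [inner_add_left, real_inner_smul_left, hw, hz]
    · rw [norm_smul, mul_pow, norm_add_sq_real, norm_smul, real_inner_smul_right,
        real_inner_smul_right, inner_add_right, real_inner_smul_right, real_inner_self_eq_norm_sq,
        Real.norm_of_nonneg (by positivity), Real.norm_of_nonneg (by positivity)]
      field_simp
      ring
    · rw [real_inner_smul_right, inner_add_right, real_inner_smul_right,
        real_inner_self_eq_norm_sq]
      field_simp
      ring

/-- `x^⊥` in the paper. For `a = 0` the coefficient is `x / 0 = 0`, so `perpTo 0 x = x`. -/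
noncomputable def perpTo (a x : E) : E := x - (⟪x, a⟫ / ‖a‖ ^ 2) • a

theorem real_inner_div_norm_sq_mul_norm_sq (x a : E) : ⟪x, a⟫ / ‖a‖ ^ 2 * ‖a‖ ^ 2 = ⟪x, a⟫ := by
  rcases eq_or_ne a 0 with rfl | ha
  · simp
  · field_simp

theorem real_inner_perpTo_left (a x : E) : ⟪perpTo a x, a⟫ = 0 := by
  rw [perpTo, inner_sub_left, real_inner_smul_left, real_inner_self_eq_norm_sq,
    real_inner_div_norm_sq_mul_norm_sq, sub_self]

theorem real_inner_perpTo_left_of_real_inner_eq_zero {a d : E} (h : ⟪d, a⟫ = 0) (x : E) :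
    ⟪perpTo a x, d⟫ = ⟪x, d⟫ := by
  rw [perpTo, inner_sub_left, real_inner_smul_left, real_inner_comm d a, h, mul_zero, sub_zero]

theorem real_inner_eq_perpTo_add (a x z : E) :
    ⟪x, z⟫ = ⟪perpTo a x, perpTo a z⟫ + ⟪x, a⟫ * ⟪z, a⟫ / ‖a‖ ^ 2 := by
  have hx := real_inner_div_norm_sq_mul_norm_sq x a
  simp only [perpTo, inner_sub_left, inner_sub_right, real_inner_smul_left, real_inner_smul_right,
    real_inner_self_eq_norm_sq, real_inner_comm z a]
  linear_combination (-(⟪z, a⟫ / ‖a‖ ^ 2)) * hx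

theorem real_inner_le_sasvi_bound {t : ℝ} (ht : 0 ≤ t) {a x y d : E} (hxa : 0 ≤ ⟪x, a⟫)
    (hya : 0 ≤ ⟪y, a⟫) (hd₁ : ⟪a, d⟫ ≤ 0) (hd₂ : ‖d‖ ^ 2 ≤ ⟪a, d⟫ + t * ⟪y, d⟫) :
    ⟪x, d⟫ ≤ t / 2 * (‖perpTo a x‖ * ‖perpTo a y‖ + ⟪perpTo a x, perpTo a y⟫) := by
  rw [real_inner_comm] at hd₁ hd₂
  rw [← real_inner_self_eq_norm_sq, real_inner_eq_perpTo_add a d d,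
    real_inner_eq_perpTo_add a y d, real_inner_self_eq_norm_sq] at hd₂
  have hcross : ∀ {v : E}, 0 ≤ ⟪v, a⟫ → ⟪v, a⟫ * ⟪d, a⟫ / ‖a‖ ^ 2 ≤ 0 := fun hv =>
    div_nonpos_of_nonpos_of_nonneg (mul_nonpos_of_nonneg_of_nonpos hv hd₁) (by positivity)
  have hperp : ‖perpTo a d‖ ^ 2 ≤ t * ⟪perpTo a y, perpTo a d⟫ := by
    nlinarith [hcross hya, div_nonneg (mul_self_nonneg ⟪d, a⟫) (sq_nonneg ‖a‖)]
  rw [real_inner_eq_perpTo_add a x d]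
  linarith [real_inner_le_of_norm_sq_le ht hperp (perpTo a x), hcross hxa]

theorem isGreatest_sasvi_bound {t : ℝ} (ht : 0 ≤ t) {a x y : E} (hxa : 0 ≤ ⟪x, a⟫)
    (hya : 0 ≤ ⟪y, a⟫) (θ₁ : E) :
    IsGreatest {v : ℝ | ∃ θ : E, (⟪a, θ - θ₁⟫ ≤ 0 ∧
        ‖θ - θ₁‖ ^ 2 ≤ ⟪a, θ - θ₁⟫ + t * ⟪y, θ - θ₁⟫) ∧ v = ⟪x, θ⟫}
      (⟪x, θ₁⟫ + t / 2 * (‖perpTo a x‖ * ‖perpTo a y‖ + ⟪perpTo a x, perpTo a y⟫)) := by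
  constructor
  · obtain ⟨d, hda, hd, hxd⟩ := exists_norm_sq_le_real_inner_eq ht
      (real_inner_perpTo_left a x) (real_inner_perpTo_left a y)
    rw [real_inner_perpTo_left_of_real_inner_eq_zero hda] at hd hxd
    refine ⟨θ₁ + d, ?_, by rw [inner_add_right, hxd]⟩
    rw [add_sub_cancel_left, real_inner_comm, hda]
    exact ⟨le_rfl, by rwa [zero_add]⟩
  · rintro _ ⟨θ, ⟨hd₁, hd₂⟩, rfl⟩
    have := real_inner_le_sasvi_bound ht hxa hya hd₁ hd₂
    rw [inner_sub_right] at this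
    linarith

theorem sasvi_region_iff {a y θ₁ θ : E} {lam₁ lam₂ : ℝ} (ha : a = (1 / lam₁) • y - θ₁) :
    (⟪θ₁ - (1 / lam₁) • y, θ - θ₁⟫ ≥ 0 ∧ ⟪θ - (1 / lam₂) • y, θ₁ - θ⟫ ≥ 0) ↔
      ⟪a, θ - θ₁⟫ ≤ 0 ∧ ‖θ - θ₁‖ ^ 2 ≤ ⟪a, θ - θ₁⟫ + (1 / lam₂ - 1 / lam₁) * ⟪y, θ - θ₁⟫ := by
  have h₁ : θ₁ - (1 / lam₁) • y = -a := by rw [ha]; abel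
  have h₂ : θ - (1 / lam₂) • y = (θ - θ₁) - a - (1 / lam₂ - 1 / lam₁) • y := by rw [ha]; module
  have h₃ : θ₁ - θ = -(θ - θ₁) := by abel
  rw [h₁, h₂, h₃]
  generalize θ - θ₁ = d
  simp only [inner_neg_left, inner_neg_right, inner_sub_left, real_inner_smul_left,
    real_inner_self_eq_norm_sq]
  constructor <;> rintro ⟨h, h'⟩ <;> constructor <;> linarith

end

theorem antitoneOn_add_one_div_sub_mul (b l₁ c : ℝ) (hc : 0 ≤ c) :
    AntitoneOn (fun l : ℝ => b + (1 / l - 1 / l₁) / 2 * c) (Set.Ioi 0) := by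
  intro l hl l' hl' hll'
  simp only
  gcongr

theorem stmt_19_general {n p : ℕ} (X : Fin p → EuclideanSpace ℝ (Fin n))
    (y : EuclideanSpace ℝ (Fin n))
    (lam1 : ℝ) (hlam1 : 0 < lam1)
    (θ1 : EuclideanSpace ℝ (Fin n))
    (hθ1mem : ∀ j, |(⟪X j, θ1⟫)| ≤ 1)
    (hθ1opt : ∀ θ : EuclideanSpace ℝ (Fin n), (∀ j, |(⟪X j, θ⟫)| ≤ 1) →
      ‖θ1 - (1 / lam1) • y‖ ≤ ‖θ - (1 / lam1) • y‖)
    (a : EuclideanSpace ℝ (Fin n)) (ha : a = (1 / lam1) • y - θ1)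
    (j : Fin p) (hja : ⟪X j, a⟫ ≥ 0) :
    (∀ lam2 ∈ Set.Ioo 0 lam1,
      IsGreatest {v : ℝ | ∃ θ : EuclideanSpace ℝ (Fin n),
          (⟪θ1 - (1 / lam1) • y, θ - θ1⟫ ≥ 0 ∧ ⟪θ - (1 / lam2) • y, θ1 - θ⟫ ≥ 0) ∧
          v = ⟪X j, θ⟫}
        (⟪X j, θ1⟫ + ((1 / lam2 - 1 / lam1) / 2) *
          (‖X j - (⟪X j, a⟫ / ‖a‖ ^ 2) • a‖ * ‖y - (⟪y, a⟫ / ‖a‖ ^ 2) • a‖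
            + ⟪X j - (⟪X j, a⟫ / ‖a‖ ^ 2) • a, y - (⟪y, a⟫ / ‖a‖ ^ 2) • a⟫))) ∧
    AntitoneOn (fun lam2 : ℝ => ⟪X j, θ1⟫ + ((1 / lam2 - 1 / lam1) / 2) *
        (‖X j - (⟪X j, a⟫ / ‖a‖ ^ 2) • a‖ * ‖y - (⟪y, a⟫ / ‖a‖ ^ 2) • a‖
          + ⟪X j - (⟪X j, a⟫ / ‖a‖ ^ 2) • a, y - (⟪y, a⟫ / ‖a‖ ^ 2) • a⟫))
      (Set.Ioc 0 lam1) ∧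
    ‖X j - (⟪X j, a⟫ / ‖a‖ ^ 2) • a‖ * ‖y - (⟪y, a⟫ / ‖a‖ ^ 2) • a‖
      + ⟪X j - (⟪X j, a⟫ / ‖a‖ ^ 2) • a, y - (⟪y, a⟫ / ‖a‖ ^ 2) • a⟫ ≥ 0 := by
  have haθ1 : 0 ≤ ⟪a, θ1⟫ := ha ▸ real_inner_residual_nonneg
    (convex_setOf_forall_abs_real_inner_le X 1) (fun j => by simp) hθ1mem hθ1opt
  have hya : 0 ≤ ⟪y, a⟫ := by
    have hy : y = lam1 • (a + θ1) := by
      rw [ha, sub_add_cancel, smul_smul, mul_one_div_cancel hlam1.ne', one_smul]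
    rw [hy, real_inner_smul_left, inner_add_left, real_inner_self_eq_norm_sq, real_inner_comm]
    exact mul_nonneg hlam1.le (add_nonneg (sq_nonneg _) haθ1)
  have hgap := norm_mul_norm_add_real_inner_nonneg (perpTo a (X j)) (perpTo a y)
  refine ⟨fun lam2 hlam2 => ?_,
    (antitoneOn_add_one_div_sub_mul _ _ _ hgap).mono Set.Ioc_subset_Ioi_self, hgap⟩
  have ht : 0 ≤ 1 / lam2 - 1 / lam1 :=
    sub_nonneg.2 (one_div_le_one_div_of_le hlam2.1 hlam2.2.le)
  simp_rw [sasvi_region_iff ha]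
  exact isGreatest_sasvi_bound ht hja hya θ1

/-- Monotonicity of the Sasvi upper bound `u_j⁺`: with `y ≠ 0`, `‖Xᵀy‖_∞ ≥ λ₁`,
`a = y/λ₁ - θ₁*` nonzero, and `⟪x_j, a⟫ ≥ 0`, the bound
`u_j⁺(λ₂) = ⟪x_j, θ₁*⟫ + ((1/λ₂ - 1/λ₁)/2)(‖x_j^⊥‖‖y^⊥‖ + ⟪x_j^⊥, y^⊥⟫)` is the
maximum of `⟪x_j, θ⟫` over `Ω`, it is monotonically decreasing in `λ₂` on `(0, λ₁]`,
and the bracketed coefficient is nonnegative by Cauchy–Schwarz. -/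
theorem stmt_19 {n p : ℕ} (X : Fin p → EuclideanSpace ℝ (Fin n))
    (y : EuclideanSpace ℝ (Fin n)) (hy : y ≠ 0) (lmax : ℝ)
    (hlmax : IsGreatest (Set.range fun j => |(⟪X j, y⟫)|) lmax)
    (lam1 : ℝ) (hlam1 : 0 < lam1) (hlam1le : lam1 ≤ lmax)
    (θ1 : EuclideanSpace ℝ (Fin n))
    (hθ1mem : ∀ j, |(⟪X j, θ1⟫)| ≤ 1)
    (hθ1opt : ∀ θ : EuclideanSpace ℝ (Fin n), (∀ j, |(⟪X j, θ⟫)| ≤ 1) →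
      ‖θ1 - (1 / lam1) • y‖ ≤ ‖θ - (1 / lam1) • y‖)
    (a : EuclideanSpace ℝ (Fin n)) (ha : a = (1 / lam1) • y - θ1) (ha0 : a ≠ 0)
    (j : Fin p) (hj : X j ≠ 0) (hja : ⟪X j, a⟫ ≥ 0) :
    (∀ lam2 ∈ Set.Ioo 0 lam1,
      IsGreatest {v : ℝ | ∃ θ : EuclideanSpace ℝ (Fin n),
          (⟪θ1 - (1 / lam1) • y, θ - θ1⟫ ≥ 0 ∧ ⟪θ - (1 / lam2) • y, θ1 - θ⟫ ≥ 0) ∧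
          v = ⟪X j, θ⟫}
        (⟪X j, θ1⟫ + ((1 / lam2 - 1 / lam1) / 2) *
          (‖X j - (⟪X j, a⟫ / ‖a‖ ^ 2) • a‖ * ‖y - (⟪y, a⟫ / ‖a‖ ^ 2) • a‖
            + ⟪X j - (⟪X j, a⟫ / ‖a‖ ^ 2) • a, y - (⟪y, a⟫ / ‖a‖ ^ 2) • a⟫))) ∧
    AntitoneOn (fun lam2 : ℝ => ⟪X j, θ1⟫ + ((1 / lam2 - 1 / lam1) / 2) *
        (‖X j - (⟪X j, a⟫ / ‖a‖ ^ 2) • a‖ * ‖y - (⟪y, a⟫ / ‖a‖ ^ 2) • a‖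
          + ⟪X j - (⟪X j, a⟫ / ‖a‖ ^ 2) • a, y - (⟪y, a⟫ / ‖a‖ ^ 2) • a⟫))
      (Set.Ioc 0 lam1) ∧
    ‖X j - (⟪X j, a⟫ / ‖a‖ ^ 2) • a‖ * ‖y - (⟪y, a⟫ / ‖a‖ ^ 2) • a‖
      + ⟪X j - (⟪X j, a⟫ / ‖a‖ ^ 2) • a, y - (⟪y, a⟫ / ‖a‖ ^ 2) • a⟫ ≥ 0 :=
  stmt_19_general X y lam1 hlam1 θ1 hθ1mem hθ1opt a ha j hja
end
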